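/- arXiv:1909.05986 — 9 statements merged into one kernel-verified Lean document; each statement's English description precedes it below -/
import Mathlib

section
/- Let 𝒞 ⊆ ℝ^n be a nonempty polytope (the convex hull of a nonempty finite set) contained in the nonnegative orthant ℝ_{≥0}^n. Then there exists a finite family W of pairs (a, b) with a ∈ ℝ_{≥0}^n and b ≥ 0 such that the lower contour set lcs(𝒞) equals the intersection over (a, b) ∈ W of the sets {x ∈ ℝ_{≥0}^n : a · x ≤ b}. -/
/-!
Call a finite intersection of closed half-spaces a polyhedron. By Fourier–Motzkin elimination,
`{x | ∃ t, x + t • v ∈ P}` is a polyhedron whenever `P` is; iterating over a spanning set,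
projections along finite-dimensional subspaces, hence linear images of polyhedra, are
polyhedra. So the convex hull of a finite set (an image of the standard simplex), its lower
closure, and `lcs 𝒞 = ℝ≥0ⁿ ∩ lowerClosure 𝒞` are polyhedra.

Since `lcs 𝒞` is a lower set of the orthant containing `0`, every defining inequality
`a ⬝ᵥ x ≤ b` has `0 ≤ b`, and may be replaced by `a⁺ ⬝ᵥ x ≤ b`: for `x ∈ lcs 𝒞`, the point
obtained by zeroing the coordinates where `a` is negative still lies in `lcs 𝒞`, and `a`
evaluates on it to `a⁺ ⬝ᵥ x`.
-/

open Finset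

theorem Finset.exists_between_of_forall_le {α : Type*} [LinearOrder α] [Nonempty α]
    {L U : Finset α} (h : ∀ l ∈ L, ∀ u ∈ U, l ≤ u) :
    ∃ t, (∀ l ∈ L, l ≤ t) ∧ ∀ u ∈ U, t ≤ u := by
  by_cases hL : L.Nonempty
  · exact ⟨L.max' hL, fun l hl => L.le_max' l hl,
      fun u hu => L.max'_le hL _ fun l hl => h l hl u hu⟩
  by_cases hU : U.Nonempty
  · exact ⟨U.min' hU, fun l hl => absurd ⟨l, hl⟩ hL, fun u hu => U.min'_le u hu⟩
  · exact ⟨Classical.arbitrary α, fun l hl => absurd ⟨l, hl⟩ hL, fun u hu => absurd ⟨u, hu⟩ hU⟩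

theorem exists_forall_mul_le_iff {β : Type*} (s : Finset β) (c d : β → ℝ) :
    (∃ t, ∀ j ∈ s, c j * t ≤ d j) ↔
      (∀ j ∈ s, c j = 0 → 0 ≤ d j) ∧
        ∀ p ∈ s, ∀ m ∈ s, 0 < c p → c m < 0 → c m * d p ≤ c p * d m := by
  constructor
  · rintro ⟨t, ht⟩
    refine ⟨fun j hj hc => by simpa [hc] using ht j hj, fun p hp m hm hcp hcm => ?_⟩
    nlinarith [mul_le_mul_of_nonneg_left (ht p hp) (neg_nonneg.2 hcm.le),
      mul_le_mul_of_nonneg_left (ht m hm) hcp.le]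
  rintro ⟨hzero, hpair⟩
  obtain ⟨t, hlower, hupper⟩ := Finset.exists_between_of_forall_le
    (L := ((s.filter (c · < 0)).image fun j => d j / c j))
    (U := ((s.filter (0 < c ·)).image fun j => d j / c j)) (by
      simp only [mem_image, mem_filter]
      rintro _ ⟨m, ⟨hm, hcm⟩, rfl⟩ _ ⟨p, ⟨hp, hcp⟩, rfl⟩
      rw [← neg_div_neg_eq, div_le_div_iff₀ (neg_pos.2 hcm) hcp]
      linarith [hpair p hp m hm hcp hcm])
  refine ⟨t, fun j hj => ?_⟩
  rcases lt_trichotomy (c j) 0 with hc | hc | hc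
  · have := hlower _ (mem_image_of_mem _ (mem_filter.2 ⟨hj, hc⟩))
    rw [div_le_iff_of_neg hc] at this
    linarith
  · simpa [hc] using hzero j hj hc
  · have := hupper _ (mem_image_of_mem _ (mem_filter.2 ⟨hj, hc⟩))
    rw [le_div_iff₀ hc] at this
    linarith

variable {E F : Type*} [AddCommGroup E] [Module ℝ E] [AddCommGroup F] [Module ℝ F]

def IsPolyhedron (P : Set E) : Prop :=
  ∃ W : Finset (Module.Dual ℝ E × ℝ), P = {x | ∀ ab ∈ W, ab.1 x ≤ ab.2}

theorem isPolyhedron_setOf_le (f : Module.Dual ℝ E) (b : ℝ) : IsPolyhedron {x | f x ≤ b} :=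
  ⟨{(f, b)}, by simp⟩

theorem isPolyhedron_setOf_eq (f : Module.Dual ℝ E) (b : ℝ) : IsPolyhedron {x | f x = b} := by
  classical
  exact ⟨{(f, b), (-f, -b)}, by ext; simp [le_antisymm_iff]⟩

namespace IsPolyhedron

theorem inter {P Q : Set E} (hP : IsPolyhedron P) (hQ : IsPolyhedron Q) :
    IsPolyhedron (P ∩ Q) := by
  classical
  obtain ⟨W, rfl⟩ := hP
  obtain ⟨W', rfl⟩ := hQ
  exact ⟨W ∪ W', by ext; simp [or_imp, forall_and]⟩

theorem preimage {P : Set E} (hP : IsPolyhedron P) (g : F →ₗ[ℝ] E) : IsPolyhedron (g ⁻¹' P) := by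
  classical
  obtain ⟨W, rfl⟩ := hP
  refine ⟨W.image fun ab => (ab.1 ∘ₗ g, ab.2), Set.ext fun x => ?_⟩
  simp only [Set.mem_preimage, Set.mem_ofPred_eq, forall_mem_image, LinearMap.comp_apply]

theorem exists_add_smul_mem {P : Set E} (hP : IsPolyhedron P) (v : E) :
    IsPolyhedron {x | ∃ t : ℝ, x + t • v ∈ P} := by
  classical
  obtain ⟨W, rfl⟩ := hP
  refine ⟨W.filter (fun ab => ab.1 v = 0) ∪
    ((W ×ˢ W).filter fun pm => 0 < pm.1.1 v ∧ pm.2.1 v < 0).image fun pm =>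
      (pm.1.1 v • pm.2.1 - pm.2.1 v • pm.1.1, pm.1.1 v * pm.2.2 - pm.2.1 v * pm.1.2), ?_⟩
  ext x
  have key := exists_forall_mul_le_iff W (fun ab => ab.1 v) (fun ab => ab.2 - ab.1 x)
  simp only [Set.mem_ofPred_eq, map_add, map_smul, smul_eq_mul, forall_mem_union,
    forall_mem_image, mem_filter, mem_product, and_imp, Prod.forall, LinearMap.sub_apply,
    LinearMap.smul_apply]
  have h1 : ∀ (a : Module.Dual ℝ E) b t, a x + t * a v ≤ b ↔ a v * t ≤ b - a x :=
    fun _ _ _ => by constructor <;> intro <;> linarith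
  have h2 : ∀ (a : Module.Dual ℝ E) b, a x ≤ b ↔ 0 ≤ b - a x := fun _ _ => sub_nonneg.symm
  have h3 : ∀ (p m : Module.Dual ℝ E) b b', p v * m x - m v * p x ≤ p v * b' - m v * b ↔
      m v * (b - p x) ≤ p v * (b' - m x) :=
    fun _ _ _ _ => by constructor <;> intro <;> linarith
  simp only [h1, h2, h3]
  simpa only [Prod.forall, imp_forall_iff] using key

theorem exists_add_mem_span {P : Set E} (hP : IsPolyhedron P) (s : Finset E) :
    IsPolyhedron {x | ∃ u ∈ Submodule.span ℝ (s : Set E), x + u ∈ P} := by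
  classical
  induction s using Finset.induction_on with
  | empty => simpa using hP
  | insert v s _ ih =>
    convert ih.exists_add_smul_mem v using 1
    ext x
    simp only [Set.mem_ofPred_eq, coe_insert, Submodule.mem_span_insert]
    constructor
    · rintro ⟨_, ⟨t, u, hu, rfl⟩, hx⟩
      exact ⟨t, u, hu, by rwa [← add_assoc] at hx⟩
    · rintro ⟨t, u, hu, hx⟩
      exact ⟨_, ⟨t, u, hu, rfl⟩, by rwa [← add_assoc]⟩

theorem image_fst [FiniteDimensional ℝ F] {P : Set (E × F)} (hP : IsPolyhedron P) :
    IsPolyhedron (Prod.fst '' P) := by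
  classical
  obtain ⟨s, hs⟩ := Module.Finite.fg_top (R := ℝ) (M := F)
  convert (hP.exists_add_mem_span (s.image (LinearMap.inr ℝ E F))).preimage (LinearMap.inl ℝ E F)
    using 1
  rw [coe_image, Submodule.span_image, hs, Submodule.map_top]
  ext x
  simp only [Set.mem_image, Prod.exists, exists_and_right, exists_eq_right, Set.mem_ofPred_eq,
    Set.mem_preimage, LinearMap.mem_range, exists_exists_eq_and, LinearMap.inl_apply,
    LinearMap.inr_apply, Prod.mk_add_mk, add_zero, zero_add]

end IsPolyhedron

theorem isPolyhedron_iInter {κ : Type*} [Finite κ] {P : κ → Set E}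
    (hP : ∀ k, IsPolyhedron (P k)) : IsPolyhedron (⋂ k, P k) := by
  classical
  have := Fintype.ofFinite κ
  choose W hW using hP
  refine ⟨univ.biUnion W, Set.ext fun x => ?_⟩
  simp only [Set.mem_iInter, hW, Set.mem_ofPred_eq, mem_biUnion, mem_univ, true_and]
  exact ⟨fun h ab ⟨i, hi⟩ => h i ab hi, fun h i ab hi => h ab ⟨i, hi⟩⟩

variable {ι : Type*} [Fintype ι]

theorem isPolyhedron_setOf_pi_le (f g : E →ₗ[ℝ] ι → ℝ) : IsPolyhedron {x | f x ≤ g x} := by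
  convert isPolyhedron_iInter fun i => isPolyhedron_setOf_le (LinearMap.proj i ∘ₗ (f - g)) 0
  ext x
  simp [Pi.le_def]

theorem isPolyhedron_setOf_pi_eq (f g : E →ₗ[ℝ] ι → ℝ) : IsPolyhedron {x | f x = g x} := by
  convert (isPolyhedron_setOf_pi_le f g).inter (isPolyhedron_setOf_pi_le g f)
  ext x
  exact le_antisymm_iff

theorem isPolyhedron_stdSimplex : IsPolyhedron (stdSimplex ℝ ι) := by
  rw [stdSimplex_eq_inter]
  refine (isPolyhedron_iInter fun i => ?_).inter ?_
  · simpa using isPolyhedron_setOf_le (-(LinearMap.proj i : (ι → ℝ) →ₗ[ℝ] ℝ)) 0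
  · simpa using isPolyhedron_setOf_eq (∑ i, (LinearMap.proj i : (ι → ℝ) →ₗ[ℝ] ℝ)) 1

theorem IsPolyhedron.image [FiniteDimensional ℝ E] {P : Set E} (hP : IsPolyhedron P)
    (f : E →ₗ[ℝ] ι → ℝ) : IsPolyhedron (f '' P) := by
  convert ((hP.preimage (LinearMap.snd ℝ (ι → ℝ) E)).inter
    (isPolyhedron_setOf_pi_eq (f ∘ₗ LinearMap.snd ℝ _ E) (LinearMap.fst ℝ _ E))).image_fst
  ext y
  simp

theorem isPolyhedron_convexHull {s : Set (ι → ℝ)} (hs : s.Finite) :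
    IsPolyhedron (convexHull ℝ s) := by
  let := hs.fintype
  rw [hs.convexHull_eq_image]
  exact isPolyhedron_stdSimplex.image _

theorem IsPolyhedron.lowerClosure {P : Set (ι → ℝ)} (hP : IsPolyhedron P) :
    IsPolyhedron (lowerClosure P : Set (ι → ℝ)) := by
  convert ((hP.preimage (LinearMap.snd ℝ (ι → ℝ) (ι → ℝ))).inter
    (isPolyhedron_setOf_pi_le (LinearMap.fst ℝ _ _) (LinearMap.snd ℝ _ _))).image_fst
  ext y
  simp

theorem Module.Dual.apply_eq_dotProduct [DecidableEq ι] (f : Module.Dual ℝ (ι → ℝ))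
    (x : ι → ℝ) : f x = (fun i => f (Pi.single i 1)) ⬝ᵥ x := by
  conv_lhs => rw [← Finset.univ_sum_single x]
  rw [map_sum]
  refine Finset.sum_congr rfl fun i _ => ?_
  dsimp only
  rw [mul_comm, ← smul_eq_mul, ← map_smul, ← Pi.single_smul', smul_eq_mul, mul_one]

theorem IsPolyhedron.exists_nonneg_halfspaces {P : Set (ι → ℝ)} (hP : IsPolyhedron P)
    (h0 : (0 : ι → ℝ) ∈ P) (hnonneg : ∀ x ∈ P, 0 ≤ x)
    (hlower : ∀ x ∈ P, ∀ y, 0 ≤ y → y ≤ x → y ∈ P) :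
    ∃ W : Finset ((ι → ℝ) × ℝ), (∀ ab ∈ W, 0 ≤ ab.1 ∧ 0 ≤ ab.2) ∧
      P = ⋂ ab ∈ W, {x | 0 ≤ x ∧ ab.1 ⬝ᵥ x ≤ ab.2} := by
  classical
  obtain ⟨W, rfl⟩ := hP
  let normal : Module.Dual ℝ (ι → ℝ) → ι → ℝ := fun f i => f (Pi.single i 1)
  have hdot (f : Module.Dual ℝ (ι → ℝ)) (x : ι → ℝ) : f x = normal f ⬝ᵥ x :=
    f.apply_eq_dotProduct x
  refine ⟨W.image fun ab => (normal ab.1 ⊔ 0, ab.2), ?_, ?_⟩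
  · simp only [forall_mem_image]
    exact fun ab hab => ⟨le_sup_right, by simpa using h0 ab hab⟩
  ext x
  simp only [Set.mem_iInter₂, forall_mem_image, Set.mem_ofPred_eq]
  constructor
  · intro hx ab hab
    let y : ι → ℝ := fun i => if 0 ≤ normal ab.1 i then x i else 0
    have hy : ∀ ab ∈ W, ab.1 y ≤ ab.2 := hlower x hx y
      (fun i => by dsimp only [y]; split_ifs; exacts [hnonneg x hx i, le_rfl])
      (fun i => by dsimp only [y]; split_ifs; exacts [le_rfl, hnonneg x hx i])
    refine ⟨hnonneg x hx, ?_⟩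
    calc (normal ab.1 ⊔ 0) ⬝ᵥ x = normal ab.1 ⬝ᵥ y := by
          refine Finset.sum_congr rfl fun i _ => ?_
          dsimp only [y]
          split_ifs with h
          · rw [Pi.sup_apply, Pi.zero_apply, max_eq_left h]
          · rw [Pi.sup_apply, Pi.zero_apply, max_eq_right (le_of_not_ge h), zero_mul, mul_zero]
      _ = ab.1 y := (hdot _ _).symm
      _ ≤ ab.2 := hy ab hab
  · intro hx ab hab
    obtain ⟨hx0, hxab⟩ := hx hab
    calc ab.1 x = normal ab.1 ⬝ᵥ x := hdot _ _
      _ ≤ (normal ab.1 ⊔ 0) ⬝ᵥ x := dotProduct_le_dotProduct_of_nonneg_right le_sup_left hx0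
      _ ≤ ab.2 := hxab

theorem statement0 (n : ℕ) (S : Finset (Fin n → ℝ)) (hSne : S.Nonempty)
    (𝒞 : Set (Fin n → ℝ)) (h𝒞 : 𝒞 = convexHull ℝ (S : Set (Fin n → ℝ)))
    (h𝒞nn : ∀ x ∈ 𝒞, ∀ k, 0 ≤ x k) :
    ∃ W : Finset ((Fin n → ℝ) × ℝ),
      (∀ ab ∈ W, (∀ k, 0 ≤ ab.1 k) ∧ 0 ≤ ab.2) ∧
      {x : Fin n → ℝ | (∀ k, 0 ≤ x k) ∧ ∃ x' ∈ 𝒞, ∀ k, x k ≤ x' k}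
        = ⋂ ab ∈ W, {x : Fin n → ℝ | (∀ k, 0 ≤ x k) ∧ ∑ k, ab.1 k * x k ≤ ab.2} := by
  have hlcs : {x : Fin n → ℝ | (∀ k, 0 ≤ x k) ∧ ∃ x' ∈ 𝒞, ∀ k, x k ≤ x' k}
      = {x | 0 ≤ x} ∩ lowerClosure 𝒞 := by
    ext x; simp [Pi.le_def]
  have horthant : IsPolyhedron {x : Fin n → ℝ | 0 ≤ x} := by
    simpa using isPolyhedron_setOf_pi_le 0 LinearMap.id
  obtain ⟨s, hs⟩ := hSne
  have hs𝒞 : s ∈ 𝒞 := h𝒞 ▸ subset_convexHull ℝ _ hs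
  rw [hlcs]
  refine IsPolyhedron.exists_nonneg_halfspaces
    (horthant.inter (h𝒞 ▸ isPolyhedron_convexHull S.finite_toSet).lowerClosure)
    ⟨le_refl (0 : Fin n → ℝ), by simpa using ⟨s, hs𝒞, h𝒞nn s hs𝒞⟩⟩ (fun x hx => hx.1) ?_
  rintro x ⟨-, hx⟩ y hy hyx
  exact ⟨hy, lowerClosure 𝒞 |>.lower hyx hx⟩
end

section
/- Every pseudo-market equilibrium assignment is equal-type envy-free: if (x*, p*) is a pseudo-market equilibrium and agents i and j are of equal type, then u_i(x*_j) ≤ u_i(x*_i). -/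
open Finset

noncomputable def dotO {O : Type*} [Fintype O] (p z : O → ℝ) : ℝ := ∑ l, p l * z l

noncomputable def dotIO {I O : Type*} [Fintype I] [Fintype O] (a x : I → O → ℝ) : ℝ :=
  ∑ i, ∑ l, a i l * x i l

noncomputable def pers {I O C : Type*} [Fintype C] (a : C → I → O → ℝ) (p : C → ℝ)
    (i : I) : O → ℝ :=
  fun l => ∑ c, a c i l * p c

theorem pers_eq_of_rows_eq {I O C : Type*} [Fintype C] (a : C → I → O → ℝ) (p : C → ℝ)
    {i j : I} (haij : ∀ c, a c i = a c j) : pers a p i = pers a p j := by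
  funext l
  simp only [pers, haij]

theorem statement3_general {I O C : Type*} [Fintype O] [Fintype C]
    (X : I → Set (O → ℝ))
    (a : C → I → O → ℝ)
    (u : I → (O → ℝ) → ℝ)
    (x : I → O → ℝ) (p : C → ℝ)
    (hopt : ∀ i, x i ∈ X i ∧ dotO (pers a p i) (x i) ≤ 1 ∧
      ∀ z ∈ X i, dotO (pers a p i) z ≤ 1 → u i z ≤ u i (x i))
    (i j : I) (hXij : X i = X j) (haij : ∀ c, a c i = a c j) :
    u i (x j) ≤ u i (x i) := by
  obtain ⟨hxj_mem, hxj_budget, -⟩ := hopt j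
  refine (hopt i).2.2 (x j) (hXij ▸ hxj_mem) ?_
  rwa [pers_eq_of_rows_eq a p haij]

theorem statement3 {I O C : Type*} [Fintype I] [Fintype O] [Fintype C]
    (S : Finset (I → O → ℝ)) (hSne : S.Nonempty)
    (𝒞 : Set (I → O → ℝ)) (h𝒞 : 𝒞 = convexHull ℝ (S : Set (I → O → ℝ)))
    (h𝒞nn : ∀ x ∈ 𝒞, ∀ i l, 0 ≤ x i l)
    (X : I → Set (O → ℝ))
    (hXnn : ∀ i, ∀ z ∈ X i, ∀ l, 0 ≤ z l)
    (hXcpt : ∀ i, IsCompact (X i))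
    (hXcvx : ∀ i, Convex ℝ (X i))
    (hX0 : ∀ i, (0 : O → ℝ) ∈ X i)
    (hXdc : ∀ i, ∀ y z : O → ℝ, (∀ l, 0 ≤ y l) → (∀ l, y l ≤ z l) → z ∈ X i → y ∈ X i)
    (a : C → I → O → ℝ) (b : C → ℝ)
    (ha : ∀ c i l, 0 ≤ a c i l) (hb : ∀ c, 0 < b c)
    (hlcs : {x : I → O → ℝ | (∀ i l, 0 ≤ x i l) ∧ ∃ x' ∈ 𝒞, ∀ i l, x i l ≤ x' i l}
      = {x : I → O → ℝ | (∀ i l, 0 ≤ x i l) ∧ (∀ i, x i ∈ X i) ∧ ∀ c, dotIO (a c) x ≤ b c})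
    (u : I → (O → ℝ) → ℝ)
    (x : I → O → ℝ) (p : C → ℝ)
    (hp : ∀ c, 0 ≤ p c)
    (hopt : ∀ i, x i ∈ X i ∧ dotO (pers a p i) (x i) ≤ 1 ∧
      ∀ z ∈ X i, dotO (pers a p i) z ≤ 1 → u i z ≤ u i (x i))
    (hfeas : x ∈ 𝒞)
    (hcs : ∀ c, dotIO (a c) x < b c → p c = 0)
    (i j : I) (hXij : X i = X j) (haij : ∀ c, a c i = a c j) :
    u i (x j) ≤ u i (x i) :=
  statement3_general X a u x p hopt i j hXij haij
end

section
/- For every α ∈ (0,1], every α-slack equilibrium assignment is equal-type envy-free: if (x*, p*) is an α-slack equilibrium and agents i and j are of equal type, then u_i(x*_j) ≤ u_i(x*_i). -/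
open Finset

theorem statement6_general {I O C : Type*} [Fintype O] [Fintype C]
    (X : I → Set (O → ℝ)) (a : C → I → O → ℝ) (u : I → (O → ℝ) → ℝ) (ω : I → O → ℝ) (α : ℝ)
    (x : I → O → ℝ) (p : C → ℝ)
    (hopt : ∀ i, x i ∈ X i ∧
      dotO (pers a p i) (x i) ≤ α + (1 - α) * dotO (pers a p i) (ω i) ∧
      ∀ z ∈ X i, dotO (pers a p i) z ≤ α + (1 - α) * dotO (pers a p i) (ω i) →
        u i z ≤ u i (x i))
    (i j : I) (hωij : ω i = ω j) (hXij : X i = X j) (haij : ∀ c, a c i = a c j) :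
    u i (x j) ≤ u i (x i) := by
  obtain ⟨hxjX, hxj_budget, -⟩ := hopt j
  refine (hopt i).2.2 (x j) (hXij ▸ hxjX) ?_
  rw [pers_eq_of_rows_eq a p haij, hωij]
  exact hxj_budget

theorem statement6 {I O C : Type*} [Fintype I] [Fintype O] [Fintype C]
    (S : Finset (I → O → ℝ)) (hSne : S.Nonempty)
    (𝒞 : Set (I → O → ℝ)) (h𝒞 : 𝒞 = convexHull ℝ (S : Set (I → O → ℝ)))
    (h𝒞nn : ∀ x ∈ 𝒞, ∀ i l, 0 ≤ x i l)
    (X : I → Set (O → ℝ))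
    (hXnn : ∀ i, ∀ z ∈ X i, ∀ l, 0 ≤ z l)
    (hXcpt : ∀ i, IsCompact (X i))
    (hXcvx : ∀ i, Convex ℝ (X i))
    (hX0 : ∀ i, (0 : O → ℝ) ∈ X i)
    (hXdc : ∀ i, ∀ y z : O → ℝ, (∀ l, 0 ≤ y l) → (∀ l, y l ≤ z l) → z ∈ X i → y ∈ X i)
    (a : C → I → O → ℝ) (b : C → ℝ)
    (ha : ∀ c i l, 0 ≤ a c i l) (hb : ∀ c, 0 < b c)
    (hlcs : {x : I → O → ℝ | (∀ i l, 0 ≤ x i l) ∧ ∃ x' ∈ 𝒞, ∀ i l, x i l ≤ x' i l}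
      = {x : I → O → ℝ | (∀ i l, 0 ≤ x i l) ∧ (∀ i, x i ∈ X i) ∧ ∀ c, dotIO (a c) x ≤ b c})
    (u : I → (O → ℝ) → ℝ)
    (ω : I → O → ℝ) (hωX : ∀ i, ω i ∈ X i) (hω𝒞 : ω ∈ 𝒞)
    (α : ℝ) (hα0 : 0 < α) (hα1 : α ≤ 1)
    (x : I → O → ℝ) (p : C → ℝ)
    (hp : ∀ c, 0 ≤ p c)
    (hopt : ∀ i, x i ∈ X i ∧
      dotO (pers a p i) (x i) ≤ α + (1 - α) * dotO (pers a p i) (ω i) ∧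
      ∀ z ∈ X i, dotO (pers a p i) z ≤ α + (1 - α) * dotO (pers a p i) (ω i) →
        u i z ≤ u i (x i))
    (hfeas : x ∈ 𝒞)
    (hcs : ∀ c, dotIO (a c) x < b c → p c = 0)
    (i j : I) (hωij : ω i = ω j) (hXij : X i = X j) (haij : ∀ c, a c i = a c j) :
    u i (x j) ≤ u i (x i) :=
  statement6_general X a u ω α x p hopt i j hωij hXij haij
end

section
/- In the doctor–hospital model with regional floor and ceiling quotas, lcs(𝒞) equals the set of all x ∈ ℝ_{≥0}^{I×O} satisfying: Σ_{l∈O} x_{i,l} ≤ 1 for every doctor i; Σ_{i∈I} x_{i,l} ≤ q_l for every hospital l; and Σ_{i∈I} Σ_{l ∈ ∪_{k∈S} R_k} x_{i,l} ≤ q̄'_S for every nonempty S ⊆ {1,…,K}, where q̄'_S are the modified ceiling quotas. -/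
open Finset

set_option linter.unusedSectionVars false
set_option linter.unusedTactic false
set_option linter.unreachableTactic false
set_option maxHeartbeats 1000000


lemma exists_sign {X : Type*} [Nonempty X] (σ ρ : Equiv.Perm X)
    (hσ2 : ∀ x, σ (σ x) = x) (hρ2 : ∀ x, ρ (ρ x) = x)
    (hσ : ∀ x, σ x ≠ x) (hρ : ∀ x, ρ x ≠ x) :
    ∃ d : X → ℝ, (∃ x, d x ≠ 0) ∧ (∀ x, d (σ x) = - d x) ∧ (∀ x, d (ρ x) = - d x) := by
  classical
  have hρρ : ρ * ρ = 1 := by ext x; simp [hρ2 x]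
  have hσσ : σ * σ = 1 := by ext x; simp [hσ2 x]
  set τ : Equiv.Perm X := σ * ρ with hτ
  have hρinv : ρ⁻¹ = ρ := by rw [eq_comm, eq_inv_iff_mul_eq_one, hρρ]
  have hστρ : σ = τ * ρ := by rw [hτ, mul_assoc, hρρ, mul_one]
  have hpow : ∀ (a b : ℤ) (x : X), (τ ^ a) ((τ ^ b) x) = (τ ^ (a + b)) x := by
    intro a b x; rw [← Equiv.Perm.mul_apply, ← zpow_add]
  have hτap : ∀ (x : X), τ x = (τ ^ (1:ℤ)) x := by intro x; simp
  have hconj : ∀ j : ℤ, ρ * τ ^ j * ρ = τ ^ (-j) := by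
    intro j
    have h1 : (MulAut.conj ρ) τ = τ⁻¹ := by
      have hσinv : σ⁻¹ = σ := by rw [eq_comm, eq_inv_iff_mul_eq_one, hσσ]
      have : ρ * τ * ρ⁻¹ = τ⁻¹ := by
        rw [hρinv, hτ, mul_inv_rev, hσinv, hρinv]
        calc ρ * (σ * ρ) * ρ = ρ * σ * (ρ * ρ) := by group
        _ = ρ * σ := by rw [hρρ, mul_one]
      simpa [MulAut.conj_apply] using this
    calc ρ * τ ^ j * ρ = (MulAut.conj ρ) (τ ^ j) := by simp [MulAut.conj_apply, hρinv]
    _ = ((MulAut.conj ρ) τ) ^ j := by rw [map_zpow]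
    _ = τ ^ (-j) := by rw [h1, ← zpow_neg_one, ← zpow_mul]; ring_nf
  have hconj' : ∀ (j : ℤ) (x : X), ρ ((τ ^ j) x) = (τ ^ (-j)) (ρ x) := by
    intro j x
    have := congrArg (fun π : Equiv.Perm X => π (ρ x)) (hconj j)
    simpa [Equiv.Perm.mul_apply, hρ2] using this
  obtain ⟨e₀⟩ := ‹Nonempty X›
  by_cases hc : ∃ j : ℤ, (τ ^ j) e₀ = ρ e₀
  · exfalso
    obtain ⟨j, hj⟩ := hc
    rcases Int.even_or_odd j with ⟨t, ht⟩ | ⟨t, ht⟩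
    · apply hρ ((τ ^ t) e₀)
      rw [hconj' t e₀, ← hj, hpow, show -t + j = t by omega]
    · apply hσ ((τ ^ (t + 1)) e₀)
      have h1 : σ ((τ ^ (t+1)) e₀) = τ (ρ ((τ ^ (t+1)) e₀)) := by
        rw [hστρ]; simp [Equiv.Perm.mul_apply]
      rw [h1, hconj' (t+1) e₀, ← hj, hpow, hτap, hpow,
        show (1:ℤ) + (-(t + 1) + j) = t + 1 by omega]
  · push_neg at hc
    set P1 : X → Prop := fun x => ∃ j : ℤ, (τ ^ j) e₀ = x with hP1
    set P2 : X → Prop := fun x => ∃ j : ℤ, (τ ^ j) (ρ e₀) = x with hP2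
    have hdisj : ∀ x, P1 x → P2 x → False := by
      rintro x ⟨a, ha⟩ ⟨b, hb⟩
      apply hc (-b + a)
      rw [← hpow, ha, ← hb, hpow]
      simp
    set d : X → ℝ := fun x => if P1 x then 1 else if P2 x then -1 else 0 with hd
    have hτP1 : ∀ x, P1 x → P1 (τ x) := by
      rintro x ⟨j, hj⟩; exact ⟨1 + j, by rw [← hpow, hj, hτap]⟩
    have hτP2 : ∀ x, P2 x → P2 (τ x) := by
      rintro x ⟨j, hj⟩; exact ⟨1 + j, by rw [← hpow, hj, hτap]⟩
    have hτP1' : ∀ x, P1 (τ x) → P1 x := by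
      rintro x ⟨j, hj⟩
      exact ⟨-1 + j, by
        rw [hτap] at hj
        apply (Equiv.injective (τ ^ (1:ℤ)))
        rw [hpow, ← hj, show (1:ℤ) + (-1 + j) = j by omega]⟩
    have hτP2' : ∀ x, P2 (τ x) → P2 x := by
      rintro x ⟨j, hj⟩
      exact ⟨-1 + j, by
        rw [hτap] at hj
        apply (Equiv.injective (τ ^ (1:ℤ)))
        rw [hpow, ← hj, show (1:ℤ) + (-1 + j) = j by omega]⟩
    have hρP12 : ∀ x, P1 x → P2 (ρ x) := by
      rintro x ⟨j, hj⟩; exact ⟨-j, by rw [← hj, hconj']⟩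
    have hρP21 : ∀ x, P2 x → P1 (ρ x) := by
      rintro x ⟨j, hj⟩
      refine ⟨-j, ?_⟩
      rw [← hj, hconj' j (ρ e₀), hρ2]
    have hdτ : ∀ x, d (τ x) = d x := by
      intro x
      by_cases h1 : P1 x
      · simp only [hd]; rw [if_pos h1, if_pos (hτP1 x h1)]
      by_cases h2 : P2 x
      · simp only [hd]
        rw [if_neg h1, if_pos h2, if_neg (fun h => h1 (hτP1' x h)), if_pos (hτP2 x h2)]
      · simp only [hd]
        rw [if_neg h1, if_neg h2, if_neg (fun h => h1 (hτP1' x h)), if_neg (fun h => h2 (hτP2' x h))]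
    have hdρ : ∀ x, d (ρ x) = - d x := by
      intro x
      by_cases h1 : P1 x
      · have h2 : P2 (ρ x) := hρP12 x h1
        have h3 : ¬ P1 (ρ x) := fun h => hdisj _ h h2
        simp only [hd]; rw [if_pos h1, if_neg h3, if_pos h2]; try norm_num
      by_cases h2 : P2 x
      · have h3 : P1 (ρ x) := hρP21 x h2
        simp only [hd]; rw [if_neg h1, if_pos h2, if_pos h3]; try norm_num
      · have h3 : ¬ P1 (ρ x) := fun h => h2 (by simpa [hρ2] using hρP12 _ h)
        have h4 : ¬ P2 (ρ x) := fun h => h1 (by simpa [hρ2] using hρP21 _ h)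
        simp only [hd]; rw [if_neg h1, if_neg h2, if_neg h3, if_neg h4]; norm_num
    refine ⟨d, ⟨e₀, ?_⟩, ?_, hdρ⟩
    · have : P1 e₀ := ⟨0, by simp⟩
      simp only [hd]; rw [if_pos this]; norm_num
    · intro x
      have : σ x = τ (ρ x) := by rw [hστρ]; simp [Equiv.Perm.mul_apply]
      rw [this, hdτ, hdρ]


lemma exists_pairing {ε α : Type*} [DecidableEq ε] [DecidableEq α] (E : Finset ε) (f : ε → Option α)
    (h2 : ∀ a : α, (E.filter fun e => f e = some a).card = 2 ∨
      (E.filter fun e => f e = some a).card = 0)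
    (hsome : ∀ e ∈ E, (f e).isSome) :
    ∃ σ : {x // x ∈ E} → {x // x ∈ E}, (∀ e, σ (σ e) = e) ∧ (∀ e, σ e ≠ e) ∧
      (∀ e, f (σ e).1 = f e.1) ∧
      (∀ e x : {x // x ∈ E}, f x.1 = f e.1 → x = e ∨ x = σ e) := by
  classical
  have hcard : ∀ e : {x // x ∈ E}, (E.filter fun y => f y = f e.1).card = 2 := by
    intro e
    obtain ⟨a, ha⟩ := Option.isSome_iff_exists.mp (hsome e.1 e.2)
    rw [ha]
    rcases h2 a with h | h
    · exact h
    · exfalso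
      have : e.1 ∈ E.filter fun y => f y = some a := by
        simp [e.2, ha]
      rw [Finset.card_eq_zero] at h
      simp [h] at this
  have hmemfib : ∀ e : {x // x ∈ E}, e.1 ∈ E.filter fun y => f y = f e.1 := by
    intro e; simp [e.2]
  have hex : ∀ e : {x // x ∈ E}, ∃ x : ε,
      (E.filter fun y => f y = f e.1).erase e.1 = {x} := by
    intro e
    apply Finset.card_eq_one.mp
    rw [Finset.card_erase_of_mem (hmemfib e), hcard e]
  choose σ₀ hσ₀ using hex
  have hmem : ∀ e, σ₀ e ∈ (E.filter fun y => f y = f e.1).erase e.1 := by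
    intro e; rw [hσ₀ e]; exact Finset.mem_singleton_self _
  have hσE : ∀ e, σ₀ e ∈ E := fun e =>
    (Finset.mem_filter.mp (Finset.mem_of_mem_erase (hmem e))).1
  have hσf : ∀ e, f (σ₀ e) = f e.1 := fun e =>
    (Finset.mem_filter.mp (Finset.mem_of_mem_erase (hmem e))).2
  have hσne : ∀ e, σ₀ e ≠ e.1 := fun e => Finset.ne_of_mem_erase (hmem e)
  set σ : {x // x ∈ E} → {x // x ∈ E} := fun e => ⟨σ₀ e, hσE e⟩ with hσdef
  have hfib : ∀ e : {x // x ∈ E}, (E.filter fun y => f y = f e.1) = {e.1, σ₀ e} := by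
    intro e
    refine (Finset.eq_of_subset_of_card_le ?_ ?_).symm
    · intro x hx
      rcases Finset.mem_insert.mp hx with h | h
      · subst h; exact hmemfib e
      · rw [Finset.mem_singleton] at h; subst h
        exact Finset.mem_of_mem_erase (hmem e)
    · rw [hcard e, Finset.card_insert_of_notMem (by simp [Ne.symm (hσne e)]),
        Finset.card_singleton]
  have huniq : ∀ e x : {x // x ∈ E}, f x.1 = f e.1 → x = e ∨ x = σ e := by
    intro e x hfx
    have : x.1 ∈ E.filter fun y => f y = f e.1 := by simp [x.2, hfx]
    rw [hfib e] at this
    rcases Finset.mem_insert.mp this with h | h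
    · left; exact Subtype.ext h
    · right; exact Subtype.ext (by rw [Finset.mem_singleton] at h; exact h)
  refine ⟨σ, ?_, ?_, hσf, huniq⟩
  · intro e
    have h1 : (E.filter fun y => f y = f (σ e).1) = {e.1, σ₀ e} := by
      rw [show f (σ e).1 = f e.1 from hσf e]; exact hfib e
    have h2' := hσ₀ (σ e)
    rw [h1] at h2'
    have h3 : ({e.1, σ₀ e} : Finset ε).erase (σ e).1 = {e.1} := by
      ext y
      simp only [Finset.mem_erase, Finset.mem_insert, Finset.mem_singleton, hσdef]
      constructor
      · rintro ⟨hne, h | h⟩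
        · exact h
        · exact absurd h hne
      · rintro rfl; exact ⟨Ne.symm (hσne e), Or.inl rfl⟩
    rw [h3] at h2'
    have : σ₀ (σ e) = e.1 := by
      exact (Finset.singleton_inj.mp h2').symm
    exact Subtype.ext this
  · intro e
    intro h
    exact hσne e (congrArg Subtype.val h)

lemma exists_flow {ε α β : Type*} [DecidableEq ε] [DecidableEq α] [DecidableEq β]
    (E : Finset ε) (hE : E.Nonempty) (f : ε → Option α) (g : ε → Option β)
    (hf : ∀ a : α, (E.filter fun e => f e = some a).card ≠ 1)
    (hg : ∀ b : β, (E.filter fun e => g e = some b).card ≠ 1) :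
    ∃ d : ε → ℝ, (∃ e, d e ≠ 0) ∧ (∀ e ∉ E, d e = 0) ∧
      (∀ a : α, ∑ e ∈ E.filter fun e => f e = some a, d e = 0) ∧
      (∀ b : β, ∑ e ∈ E.filter fun e => g e = some b, d e = 0) := by
  classical
  by_contra hcon
  have key : ∀ d : ε → ℝ, (∀ e ∉ E, d e = 0) →
      (∀ a : α, ∑ e ∈ E.filter fun e => f e = some a, d e = 0) →
      (∀ b : β, ∑ e ∈ E.filter fun e => g e = some b, d e = 0) → ∀ e, d e = 0 := by
    intro d h1 h2 h3
    by_contra h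
    push_neg at h
    exact hcon ⟨d, h, h1, h2, h3⟩
  set A' : Finset α := E.biUnion (fun e => (f e).toFinset) with hA'
  set B' : Finset β := E.biUnion (fun e => (g e).toFinset) with hB'
  have hA'mem : ∀ a : α, a ∈ A' ↔ ∃ e ∈ E, f e = some a := by
    intro a
    simp [hA', Finset.mem_biUnion, Option.mem_toFinset, Option.mem_def]
  have hB'mem : ∀ b : β, b ∈ B' ↔ ∃ e ∈ E, g e = some b := by
    intro b
    simp [hB', Finset.mem_biUnion, Option.mem_toFinset, Option.mem_def]
  -- the vectors
  set χ : {x // x ∈ E} → (({a // a ∈ A'} ⊕ {b // b ∈ B'}) → ℝ) := fun e =>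
    Sum.elim (fun a => if f e.1 = some a.1 then 1 else 0)
      (fun b => if g e.1 = some b.1 then 1 else 0) with hχ
  have hind : LinearIndependent ℝ χ := by
    rw [Fintype.linearIndependent_iff]
    intro c hc
    set d : ε → ℝ := fun x => if h : x ∈ E then c ⟨x, h⟩ else 0 with hdd
    have hd0 : ∀ x ∉ E, d x = 0 := fun x hx => dif_neg hx
    have hde : ∀ e : {x // x ∈ E}, d e.1 = c e := by
      intro e; simp only [hdd]; rw [dif_pos e.2]
    have hgen : ∀ (p : ε → Prop) [DecidablePred p],
        ∑ e : {x // x ∈ E}, (if p e.1 then c e else 0) =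
        ∑ x ∈ E.filter (fun e => p e), d x := by
      intro p hp
      rw [Finset.sum_filter, ← Finset.sum_attach E (fun x => if p x then d x else 0)]
      apply Finset.sum_congr rfl
      intro e _
      by_cases h : p e.1 <;> simp [h, hde]
    have hsumf : ∀ a : α, ∑ e ∈ E.filter fun e => f e = some a, d e = 0 := by
      intro a
      by_cases ha : a ∈ A'
      · have h1 := congrFun hc (Sum.inl ⟨a, ha⟩)
        simp only [Finset.sum_apply, Pi.smul_apply, hχ, Sum.elim_inl, smul_eq_mul,
          mul_ite, mul_one, mul_zero, Pi.zero_apply] at h1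
        rw [← hgen (fun e => f e = some a)]
        exact h1
      · have : E.filter (fun e => f e = some a) = ∅ := by
          rw [Finset.filter_eq_empty_iff]
          intro e he hfe
          exact ha ((hA'mem a).mpr ⟨e, he, hfe⟩)
        simp [this]
    have hsumg : ∀ b : β, ∑ e ∈ E.filter fun e => g e = some b, d e = 0 := by
      intro b
      by_cases hb : b ∈ B'
      · have h1 := congrFun hc (Sum.inr ⟨b, hb⟩)
        simp only [Finset.sum_apply, Pi.smul_apply, hχ, Sum.elim_inr, smul_eq_mul,
          mul_ite, mul_one, mul_zero, Pi.zero_apply] at h1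
        rw [← hgen (fun e => g e = some b)]
        exact h1
      · have : E.filter (fun e => g e = some b) = ∅ := by
          rw [Finset.filter_eq_empty_iff]
          intro e he hge
          exact hb ((hB'mem b).mpr ⟨e, he, hge⟩)
        simp [this]
    intro e
    have := key d hd0 hsumf hsumg e.1
    rwa [hde] at this
  have hcardle : E.card ≤ A'.card + B'.card := by
    have h1 := hind.fintype_card_le_finrank
    rwa [Module.finrank_fintype_fun_eq_card, Fintype.card_coe, Fintype.card_sum,
      Fintype.card_coe, Fintype.card_coe] at h1
  -- counting for f
  have hcover_f : A'.biUnion (fun a => E.filter fun e => f e = some a)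
      = E.filter (fun e => (f e).isSome) := by
    ext e
    simp only [Finset.mem_biUnion, Finset.mem_filter]
    constructor
    · rintro ⟨a, _, he, hfe⟩; exact ⟨he, by simp [hfe]⟩
    · rintro ⟨he, hs⟩
      obtain ⟨a, ha⟩ := Option.isSome_iff_exists.mp hs
      exact ⟨a, (hA'mem a).mpr ⟨e, he, ha⟩, he, ha⟩
  have hcover_g : B'.biUnion (fun b => E.filter fun e => g e = some b)
      = E.filter (fun e => (g e).isSome) := by
    ext e
    simp only [Finset.mem_biUnion, Finset.mem_filter]
    constructor
    · rintro ⟨b, _, he, hge⟩; exact ⟨he, by simp [hge]⟩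
    · rintro ⟨he, hs⟩
      obtain ⟨b, hb⟩ := Option.isSome_iff_exists.mp hs
      exact ⟨b, (hB'mem b).mpr ⟨e, he, hb⟩, he, hb⟩
  have hsum_f : ∑ a ∈ A', (E.filter fun e => f e = some a).card
      = (E.filter (fun e => (f e).isSome)).card := by
    rw [← hcover_f]
    rw [Finset.card_biUnion]
    intro a _ a' _ hne
    simp only [Finset.disjoint_filter]
    intro e _ h1 h2
    apply hne
    rw [h1] at h2
    first
    | exact Option.some_inj.mp h2
    | exact (Option.some_inj.mp h2).symm
  have hsum_g : ∑ b ∈ B', (E.filter fun e => g e = some b).card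
      = (E.filter (fun e => (g e).isSome)).card := by
    rw [← hcover_g]
    rw [Finset.card_biUnion]
    intro b _ b' _ hne
    simp only [Finset.disjoint_filter]
    intro e _ h1 h2
    apply hne
    rw [h1] at h2
    first
    | exact Option.some_inj.mp h2
    | exact (Option.some_inj.mp h2).symm
  have hge2_f : ∀ a ∈ A', 2 ≤ (E.filter fun e => f e = some a).card := by
    intro a ha
    obtain ⟨e, he, hfe⟩ := (hA'mem a).mp ha
    have h1 : 0 < (E.filter fun e => f e = some a).card :=
      Finset.card_pos.mpr ⟨e, Finset.mem_filter.mpr ⟨he, hfe⟩⟩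
    have := hf a
    omega
  have hge2_g : ∀ b ∈ B', 2 ≤ (E.filter fun e => g e = some b).card := by
    intro b hb
    obtain ⟨e, he, hge⟩ := (hB'mem b).mp hb
    have h1 : 0 < (E.filter fun e => g e = some b).card :=
      Finset.card_pos.mpr ⟨e, Finset.mem_filter.mpr ⟨he, hge⟩⟩
    have := hg b
    omega
  have h2A : 2 * A'.card ≤ ∑ a ∈ A', (E.filter fun e => f e = some a).card := by
    calc 2 * A'.card = ∑ _a ∈ A', 2 := by rw [Finset.sum_const, smul_eq_mul, mul_comm]
    _ ≤ _ := Finset.sum_le_sum hge2_f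
  have h2B : 2 * B'.card ≤ ∑ b ∈ B', (E.filter fun e => g e = some b).card := by
    calc 2 * B'.card = ∑ _b ∈ B', 2 := by rw [Finset.sum_const, smul_eq_mul, mul_comm]
    _ ≤ _ := Finset.sum_le_sum hge2_g
  have hfle : (E.filter (fun e => (f e).isSome)).card ≤ E.card :=
    Finset.card_le_card (Finset.filter_subset _ _)
  have hgle : (E.filter (fun e => (g e).isSome)).card ≤ E.card :=
    Finset.card_le_card (Finset.filter_subset _ _)
  -- all equalities
  have heqf : (E.filter (fun e => (f e).isSome)).card = E.card := by omega
  have heqg : (E.filter (fun e => (g e).isSome)).card = E.card := by omega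
  have hsum2f : ∑ a ∈ A', (E.filter fun e => f e = some a).card = 2 * A'.card := by omega
  have hsum2g : ∑ b ∈ B', (E.filter fun e => g e = some b).card = 2 * B'.card := by omega
  have hsome_f : ∀ e ∈ E, (f e).isSome := by
    intro e he
    have h1 : E.filter (fun e => (f e).isSome) = E :=
      Finset.eq_of_subset_of_card_le (Finset.filter_subset _ _) (le_of_eq heqf.symm)
    have : e ∈ E.filter (fun e => (f e).isSome) := h1.symm ▸ he
    exact (Finset.mem_filter.mp this).2
  have hsome_g : ∀ e ∈ E, (g e).isSome := by
    intro e he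
    have h1 : E.filter (fun e => (g e).isSome) = E :=
      Finset.eq_of_subset_of_card_le (Finset.filter_subset _ _) (le_of_eq heqg.symm)
    have : e ∈ E.filter (fun e => (g e).isSome) := h1.symm ▸ he
    exact (Finset.mem_filter.mp this).2
  have hexact_f : ∀ a : α, (E.filter fun e => f e = some a).card = 2 ∨
      (E.filter fun e => f e = some a).card = 0 := by
    intro a
    by_cases ha : a ∈ A'
    · left
      by_contra hne
      have h3 : 3 ≤ (E.filter fun e => f e = some a).card := by
        have := hge2_f a ha; omega
      have hsplit : (E.filter fun e => f e = some a).card +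
          ∑ a' ∈ A'.erase a, (E.filter fun e => f e = some a').card
          = ∑ a' ∈ A', (E.filter fun e => f e = some a').card :=
        Finset.add_sum_erase A' (fun a => (E.filter fun e => f e = some a).card) ha
      have herase : 2 * (A'.erase a).card ≤
          ∑ a' ∈ A'.erase a, (E.filter fun e => f e = some a').card := by
        calc 2 * (A'.erase a).card = ∑ _a ∈ A'.erase a, 2 := by
              rw [Finset.sum_const, smul_eq_mul, mul_comm]
        _ ≤ _ := Finset.sum_le_sum (fun a' ha' => hge2_f a' (Finset.mem_of_mem_erase ha'))
      have hcarderase : (A'.erase a).card = A'.card - 1 := Finset.card_erase_of_mem ha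
      have hpos : 0 < A'.card := Finset.card_pos.mpr ⟨a, ha⟩
      omega
    · right
      rw [Finset.card_eq_zero, Finset.filter_eq_empty_iff]
      intro e he hfe
      exact ha ((hA'mem a).mpr ⟨e, he, hfe⟩)
  have hexact_g : ∀ b : β, (E.filter fun e => g e = some b).card = 2 ∨
      (E.filter fun e => g e = some b).card = 0 := by
    intro b
    by_cases hb : b ∈ B'
    · left
      by_contra hne
      have h3 : 3 ≤ (E.filter fun e => g e = some b).card := by
        have := hge2_g b hb; omega
      have hsplit : (E.filter fun e => g e = some b).card +
          ∑ b' ∈ B'.erase b, (E.filter fun e => g e = some b').card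
          = ∑ b' ∈ B', (E.filter fun e => g e = some b').card :=
        Finset.add_sum_erase B' (fun b => (E.filter fun e => g e = some b).card) hb
      have herase : 2 * (B'.erase b).card ≤
          ∑ b' ∈ B'.erase b, (E.filter fun e => g e = some b').card := by
        calc 2 * (B'.erase b).card = ∑ _b ∈ B'.erase b, 2 := by
              rw [Finset.sum_const, smul_eq_mul, mul_comm]
        _ ≤ _ := Finset.sum_le_sum (fun b' hb' => hge2_g b' (Finset.mem_of_mem_erase hb'))
      have hcarderase : (B'.erase b).card = B'.card - 1 := Finset.card_erase_of_mem hb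
      have hpos : 0 < B'.card := Finset.card_pos.mpr ⟨b, hb⟩
      omega
    · right
      rw [Finset.card_eq_zero, Finset.filter_eq_empty_iff]
      intro e he hge
      exact hb ((hB'mem b).mpr ⟨e, he, hge⟩)
  -- pairings
  obtain ⟨σ, hσ2, hσne, hσf, hσuniq⟩ := exists_pairing E f hexact_f hsome_f
  obtain ⟨ρ, hρ2, hρne, hρg, hρuniq⟩ := exists_pairing E g hexact_g hsome_g
  have : Nonempty {x // x ∈ E} := by
    obtain ⟨e, he⟩ := hE
    exact ⟨⟨e, he⟩⟩
  have hσinv : Function.Involutive σ := hσ2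
  have hρinv : Function.Involutive ρ := hρ2
  obtain ⟨d', hd'ne, hd'σ, hd'ρ⟩ := exists_sign hσinv.toPerm hρinv.toPerm
    (by intro x; simp only [Function.Involutive.coe_toPerm]; exact hσ2 x)
    (by intro x; simp only [Function.Involutive.coe_toPerm]; exact hρ2 x)
    (by intro x; simp only [Function.Involutive.coe_toPerm]; exact hσne x)
    (by intro x; simp only [Function.Involutive.coe_toPerm]; exact hρne x)
  simp only [Function.Involutive.coe_toPerm] at hd'σ hd'ρ
  set d : ε → ℝ := fun x => if h : x ∈ E then d' ⟨x, h⟩ else 0 with hdd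
  have hd0 : ∀ x ∉ E, d x = 0 := fun x hx => dif_neg hx
  have hde : ∀ e : {x // x ∈ E}, d e.1 = d' e := by
    intro e; simp only [hdd]; rw [dif_pos e.2]
  have hsumf : ∀ a : α, ∑ e ∈ E.filter fun e => f e = some a, d e = 0 := by
    intro a
    rcases Finset.eq_empty_or_nonempty (E.filter fun e => f e = some a) with h | ⟨e', he'⟩
    · simp [h]
    · have he'E : e' ∈ E := (Finset.mem_filter.mp he').1
      have hfe' : f e' = some a := (Finset.mem_filter.mp he').2
      set ebar : {x // x ∈ E} := ⟨e', he'E⟩ with hebar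
      have hne : ebar.1 ≠ (σ ebar).1 := fun h => (hσne ebar) (Subtype.ext h.symm)
      have hfil : E.filter (fun e => f e = some a) = {ebar.1, (σ ebar).1} := by
        ext x
        simp only [Finset.mem_filter, Finset.mem_insert, Finset.mem_singleton]
        constructor
        · rintro ⟨hxE, hfx⟩
          rcases hσuniq ebar ⟨x, hxE⟩ (by rw [hfx]; exact hfe'.symm ▸ rfl) with h | h
          · left; exact congrArg Subtype.val h
          · right; exact congrArg Subtype.val h
        · rintro (rfl | rfl)
          · exact ⟨ebar.2, hfe'⟩
          · exact ⟨(σ ebar).2, by rw [hσf ebar]; exact hfe'⟩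
      rw [hfil, Finset.sum_pair hne, hde ebar, hde (σ ebar), hd'σ ebar]
      ring
  have hsumg : ∀ b : β, ∑ e ∈ E.filter fun e => g e = some b, d e = 0 := by
    intro b
    rcases Finset.eq_empty_or_nonempty (E.filter fun e => g e = some b) with h | ⟨e', he'⟩
    · simp [h]
    · have he'E : e' ∈ E := (Finset.mem_filter.mp he').1
      have hge' : g e' = some b := (Finset.mem_filter.mp he').2
      set ebar : {x // x ∈ E} := ⟨e', he'E⟩ with hebar
      have hne : ebar.1 ≠ (ρ ebar).1 := fun h => (hρne ebar) (Subtype.ext h.symm)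
      have hfil : E.filter (fun e => g e = some b) = {ebar.1, (ρ ebar).1} := by
        ext x
        simp only [Finset.mem_filter, Finset.mem_insert, Finset.mem_singleton]
        constructor
        · rintro ⟨hxE, hgx⟩
          rcases hρuniq ebar ⟨x, hxE⟩ (by rw [hgx]; exact hge'.symm ▸ rfl) with h | h
          · left; exact congrArg Subtype.val h
          · right; exact congrArg Subtype.val h
        · rintro (rfl | rfl)
          · exact ⟨ebar.2, hge'⟩
          · exact ⟨(ρ ebar).2, by rw [hρg ebar]; exact hge'⟩
      rw [hfil, Finset.sum_pair hne, hde ebar, hde (ρ ebar), hd'ρ ebar]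
      ring
  obtain ⟨x₀, hx₀⟩ := hd'ne
  exact hx₀ (by rw [← hde x₀]; exact key d hd0 hsumf hsumg x₀.1)

def PSet8 (I O : Type*) [Fintype I] [Fintype O] {K : ℕ} (q : O → ℕ) (R : Fin K → Finset O)
    (qlow qhigh : Fin K → ℕ) : Set (I → O → ℝ) :=
  {x | (∀ i l, 0 ≤ x i l) ∧ (∀ i, ∑ l, x i l ≤ 1) ∧ (∀ l, ∑ i, x i l ≤ (q l : ℝ)) ∧
    (∀ k, (qlow k : ℝ) ≤ ∑ i, ∑ l ∈ R k, x i l ∧ ∑ i, ∑ l ∈ R k, x i l ≤ (qhigh k : ℝ))}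

lemma sum01 {γ : Type*} (s : Finset γ) (a : γ → ℝ) (h : ∀ t ∈ s, a t = 0 ∨ a t = 1) :
    ∃ n : ℕ, ∑ t ∈ s, a t = n := by
  classical
  induction s using Finset.induction with
  | empty => exact ⟨0, by simp⟩
  | @insert c s hc ih =>
    obtain ⟨n, hn⟩ := ih (fun t ht => h t (Finset.mem_insert_of_mem ht))
    rcases h c (Finset.mem_insert_self c s) with h0 | h1
    · exact ⟨n, by rw [Finset.sum_insert hc, h0, hn]; ring⟩
    · exact ⟨n + 1, by rw [Finset.sum_insert hc, h1, hn]; push_cast; ring⟩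

lemma pos_lt_one_not_nat_sub {y : ℝ} (h0 : 0 < y) (h1 : y < 1) (m n : ℕ) :
    (m : ℝ) ≠ y + n := by
  intro h
  rcases le_or_gt m n with hle | hlt
  · have : (m : ℝ) ≤ n := by exact_mod_cast hle
    linarith
  · have : (n : ℝ) + 1 ≤ m := by exact_mod_cast hlt
    linarith


lemma extreme_01 {I O : Type*} [Fintype I] [Fintype O] [DecidableEq O] {K : ℕ}
    (q : O → ℕ) (R : Fin K → Finset O)
    (hRdisj : ∀ k k', k ≠ k' → Disjoint (R k) (R k'))
    (hRcover : ∀ l : O, ∃ k, l ∈ R k)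
    (qlow qhigh : Fin K → ℕ)
    (x : I → O → ℝ)
    (hx : x ∈ Set.extremePoints ℝ (PSet8 I O q R qlow qhigh)) :
    ∀ i l, x i l = 0 ∨ x i l = 1 := by
  classical
  obtain ⟨hxP, hxext⟩ := hx
  obtain ⟨hpos, hrow, hcol, hreg⟩ := hxP
  by_contra hfrac
  push_neg at hfrac
  obtain ⟨i₀', l₀', hne0, hne1⟩ := hfrac
  -- upper bound on entries
  have hub : ∀ i l, x i l ≤ 1 := by
    intro i l
    calc x i l ≤ ∑ l', x i l' :=
      Finset.single_le_sum (fun l' _ => hpos i l') (Finset.mem_univ l)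
    _ ≤ 1 := hrow i
  -- the fractional cells
  set E : Finset (I × O) := Finset.univ.filter (fun p => x p.1 p.2 ≠ 0 ∧ x p.1 p.2 ≠ 1) with hEdef
  have hEmem : ∀ p : I × O, p ∈ E ↔ (x p.1 p.2 ≠ 0 ∧ x p.1 p.2 ≠ 1) := by
    intro p; simp [hEdef]
  have hEne : E.Nonempty := ⟨(i₀', l₀'), (hEmem _).mpr ⟨hne0, hne1⟩⟩
  have hEpos : ∀ p ∈ E, 0 < x p.1 p.2 := by
    intro p hp
    rcases (hEmem p).mp hp with ⟨h0, _⟩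
    exact lt_of_le_of_ne (hpos p.1 p.2) (Ne.symm h0)
  have hElt1 : ∀ p ∈ E, x p.1 p.2 < 1 := by
    intro p hp
    rcases (hEmem p).mp hp with ⟨_, h1⟩
    exact lt_of_le_of_ne (hub p.1 p.2) h1
  have h01 : ∀ p : I × O, p ∉ E → x p.1 p.2 = 0 ∨ x p.1 p.2 = 1 := by
    intro p hp
    by_contra h
    push_neg at h
    exact hp ((hEmem p).mpr h)
  -- region assignment
  have hregex : ∀ l : O, ∃ k, l ∈ R k := hRcover
  choose reg hregmem using hregex
  have hreguniq : ∀ l k, l ∈ R k → reg l = k := by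
    intro l k hl
    by_contra hne
    exact Finset.disjoint_left.mp (hRdisj _ _ hne) (hregmem l) hl
  -- tightness
  set rowT : I → Prop := fun i => ∑ l, x i l = 1 with hrowT
  set colT : O → Prop := fun l => ∑ i, x i l = (q l : ℝ) with hcolT
  set regS : Fin K → ℝ := fun k => ∑ i, ∑ l ∈ R k, x i l with hregS
  set regT : Fin K → Prop := fun k => regS k = (qlow k : ℝ) ∨ regS k = (qhigh k : ℝ) with hregT
  set f : I × O → Option I := fun p => if rowT p.1 then some p.1 else none with hfdef
  set g : I × O → Option (O ⊕ Fin K) := fun p =>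
    if colT p.2 then some (Sum.inl p.2)
    else if regT (reg p.2) then some (Sum.inr (reg p.2)) else none with hgdef
  -- characterize fibers
  have hffib : ∀ (p : I × O) (i : I), f p = some i ↔ (rowT p.1 ∧ p.1 = i) := by
    intro p i
    simp only [hfdef]
    by_cases h : rowT p.1 <;> simp [h]
  have hgfib_col : ∀ (p : I × O) (l : O), g p = some (Sum.inl l) ↔ (colT p.2 ∧ p.2 = l) := by
    intro p l
    simp only [hgdef]
    by_cases h : colT p.2
    · rw [if_pos h]
      simp only [Option.some_inj, Sum.inl.injEq]
      exact ⟨fun hh => ⟨h, hh⟩, fun hh => hh.2⟩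
    · simp only [if_neg h]
      by_cases h2 : regT (reg p.2)
      · rw [if_pos h2]
        exact iff_of_false (by simp) (fun hh => h hh.1)
      · rw [if_neg h2]
        exact iff_of_false (by simp) (fun hh => h hh.1)
  have hgfib_reg : ∀ (p : I × O) (k : Fin K),
      g p = some (Sum.inr k) ↔ (¬ colT p.2 ∧ regT (reg p.2) ∧ reg p.2 = k) := by
    intro p k
    simp only [hgdef]
    by_cases h : colT p.2
    · rw [if_pos h]
      exact iff_of_false (by simp) (fun hh => hh.1 h)
    · simp only [if_neg h]
      by_cases h2 : regT (reg p.2)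
      · rw [if_pos h2]
        constructor
        · intro hh
          exact ⟨h, h2, by injection hh with hh2; injection hh2⟩
        · rintro ⟨_, _, rfl⟩; rfl
      · rw [if_neg h2]
        exact iff_of_false (by simp) (fun hh => h2 hh.2.1)
  -- row fiber condition
  have hfcard : ∀ i₀ : I, (E.filter fun p => f p = some i₀).card ≠ 1 := by
    intro i₀ hcard
    obtain ⟨p₀, hp₀⟩ := Finset.card_eq_one.mp hcard
    have hp₀mem : p₀ ∈ E.filter fun p => f p = some i₀ := by
      rw [hp₀]; exact Finset.mem_singleton_self _
    have hp₀E : p₀ ∈ E := (Finset.mem_filter.mp hp₀mem).1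
    have hp₀f := (Finset.mem_filter.mp hp₀mem).2
    rw [hffib] at hp₀f
    obtain ⟨hrowt, hp1⟩ := hp₀f
    rw [hp1] at hrowt
    set l₀ := p₀.2 with hl₀
    have hothers : ∀ l ∈ Finset.univ.erase l₀, x i₀ l = 0 ∨ x i₀ l = 1 := by
      intro l hl
      have hlne : l ≠ l₀ := Finset.ne_of_mem_erase hl
      apply h01 (i₀, l)
      intro hmem
      have hmem2 : (i₀, l) ∈ E.filter fun p => f p = some i₀ :=
        Finset.mem_filter.mpr ⟨hmem, (hffib (i₀, l) i₀).mpr ⟨hrowt, rfl⟩⟩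
      rw [hp₀, Finset.mem_singleton] at hmem2
      apply hlne
      rw [hl₀, ← hmem2]
    obtain ⟨n, hn⟩ := sum01 (Finset.univ.erase l₀) (fun l => x i₀ l) hothers
    have hsplit : x i₀ l₀ + ∑ l ∈ Finset.univ.erase l₀, x i₀ l = ∑ l, x i₀ l :=
      Finset.add_sum_erase Finset.univ (fun l => x i₀ l) (Finset.mem_univ l₀)
    have hx0 : 0 < x i₀ l₀ := by
      have := hEpos p₀ hp₀E; rwa [hp1] at this
    have hx1 : x i₀ l₀ < 1 := by
      have := hElt1 p₀ hp₀E; rwa [hp1] at this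
    apply pos_lt_one_not_nat_sub hx0 hx1 1 n
    rw [Nat.cast_one, ← hrowt, ← hsplit, hn]
  -- column fiber condition
  have hgcard_col : ∀ l₀ : O, (E.filter fun p => g p = some (Sum.inl l₀)).card ≠ 1 := by
    intro l₀ hcard
    obtain ⟨p₀, hp₀⟩ := Finset.card_eq_one.mp hcard
    have hp₀mem : p₀ ∈ E.filter fun p => g p = some (Sum.inl l₀) := by
      rw [hp₀]; exact Finset.mem_singleton_self _
    have hp₀E : p₀ ∈ E := (Finset.mem_filter.mp hp₀mem).1
    have hp₀g := (Finset.mem_filter.mp hp₀mem).2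
    rw [hgfib_col] at hp₀g
    obtain ⟨hcolt, hp2⟩ := hp₀g
    rw [hp2] at hcolt
    set i₀ := p₀.1 with hi₀
    have hothers : ∀ i ∈ Finset.univ.erase i₀, x i l₀ = 0 ∨ x i l₀ = 1 := by
      intro i hi
      have hine : i ≠ i₀ := Finset.ne_of_mem_erase hi
      apply h01 (i, l₀)
      intro hmem
      have hmem2 : (i, l₀) ∈ E.filter fun p => g p = some (Sum.inl l₀) :=
        Finset.mem_filter.mpr ⟨hmem, (hgfib_col (i, l₀) l₀).mpr ⟨hcolt, rfl⟩⟩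
      rw [hp₀, Finset.mem_singleton] at hmem2
      apply hine
      rw [hi₀, ← hmem2]
    obtain ⟨n, hn⟩ := sum01 (Finset.univ.erase i₀) (fun i => x i l₀) hothers
    have hsplit : x i₀ l₀ + ∑ i ∈ Finset.univ.erase i₀, x i l₀ = ∑ i, x i l₀ :=
      Finset.add_sum_erase Finset.univ (fun i => x i l₀) (Finset.mem_univ i₀)
    have hx0 : 0 < x i₀ l₀ := by
      have := hEpos p₀ hp₀E; rwa [hp2] at this
    have hx1 : x i₀ l₀ < 1 := by
      have := hElt1 p₀ hp₀E; rwa [hp2] at this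
    apply pos_lt_one_not_nat_sub hx0 hx1 (q l₀) n
    rw [← hcolt, ← hsplit, hn]
  -- region fiber condition
  have hgcard_reg : ∀ k₀ : Fin K, (E.filter fun p => g p = some (Sum.inr k₀)).card ≠ 1 := by
    intro k₀ hcard
    obtain ⟨p₀, hp₀⟩ := Finset.card_eq_one.mp hcard
    have hp₀mem : p₀ ∈ E.filter fun p => g p = some (Sum.inr k₀) := by
      rw [hp₀]; exact Finset.mem_singleton_self _
    have hp₀E : p₀ ∈ E := (Finset.mem_filter.mp hp₀mem).1
    have hp₀g := (Finset.mem_filter.mp hp₀mem).2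
    rw [hgfib_reg] at hp₀g
    obtain ⟨hncolt, hregt, hregk⟩ := hp₀g
    set i₀ := p₀.1 with hi₀
    set l₀ := p₀.2 with hl₀
    have hl₀R : l₀ ∈ R k₀ := by rw [← hregk]; exact hregmem l₀
    rw [hregk] at hregt
    -- swap the region sum
    have hswap : regS k₀ = ∑ l ∈ R k₀, ∑ i, x i l := by
      rw [hregS]; exact Finset.sum_comm
    -- split into tight and non-tight columns
    set T : Finset O := (R k₀).filter (fun l => colT l) with hT
    set NT : Finset O := (R k₀).filter (fun l => ¬ colT l) with hNT
    have hsplitTN : ∑ l ∈ T, ∑ i, x i l + ∑ l ∈ NT, ∑ i, x i l = ∑ l ∈ R k₀, ∑ i, x i l :=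
      Finset.sum_filter_add_sum_filter_not (R k₀) (fun l => colT l) _
    -- tight columns sum to a natural number
    have hTsum : ∑ l ∈ T, ∑ i, x i l = ((∑ l ∈ T, q l : ℕ) : ℝ) := by
      push_cast
      apply Finset.sum_congr rfl
      intro l hl
      exact (Finset.mem_filter.mp hl).2
    -- l₀ is a non-tight column
    have hl₀NT : l₀ ∈ NT := Finset.mem_filter.mpr ⟨hl₀R, hncolt⟩
    -- other non-tight columns have all integer entries
    have hothers : ∀ p ∈ ((NT.erase l₀) ×ˢ (Finset.univ : Finset I)),
        x p.2 p.1 = 0 ∨ x p.2 p.1 = 1 := by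
      rintro ⟨l, i⟩ hp
      rw [Finset.mem_product] at hp
      obtain ⟨hl, _⟩ := hp
      have hlne : l ≠ l₀ := Finset.ne_of_mem_erase hl
      have hlNT := Finset.mem_of_mem_erase hl
      have hlR : l ∈ R k₀ := (Finset.mem_filter.mp hlNT).1
      have hlnc : ¬ colT l := (Finset.mem_filter.mp hlNT).2
      apply h01 (i, l)
      intro hmem
      have hgeq : g (i, l) = some (Sum.inr k₀) :=
        (hgfib_reg (i, l) k₀).mpr ⟨hlnc, by rw [hreguniq l k₀ hlR]; exact hregt, hreguniq l k₀ hlR⟩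
      have hmem2 : (i, l) ∈ E.filter fun p => g p = some (Sum.inr k₀) :=
        Finset.mem_filter.mpr ⟨hmem, hgeq⟩
      rw [hp₀, Finset.mem_singleton] at hmem2
      apply hlne
      rw [hl₀, ← hmem2]
    obtain ⟨n₂, hn₂⟩ := sum01 _ _ hothers
    have hNTsplit : ∑ l ∈ NT, ∑ i, x i l = ∑ i, x i l₀ + ∑ l ∈ NT.erase l₀, ∑ i, x i l :=
      (Finset.add_sum_erase NT (fun l => ∑ i, x i l) hl₀NT).symm
    have hNTerase : ∑ l ∈ NT.erase l₀, ∑ i, x i l = (n₂ : ℝ) := by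
      rw [← hn₂, Finset.sum_product]
    -- column l₀ : entries other than i₀ are integers
    have hothers0 : ∀ i ∈ Finset.univ.erase i₀, x i l₀ = 0 ∨ x i l₀ = 1 := by
      intro i hi
      have hine : i ≠ i₀ := Finset.ne_of_mem_erase hi
      apply h01 (i, l₀)
      intro hmem
      have hgeq : g (i, l₀) = some (Sum.inr k₀) :=
        (hgfib_reg (i, l₀) k₀).mpr ⟨hncolt, by rw [hreguniq l₀ k₀ hl₀R]; exact hregt,
          hreguniq l₀ k₀ hl₀R⟩
      have hmem2 : (i, l₀) ∈ E.filter fun p => g p = some (Sum.inr k₀) :=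
        Finset.mem_filter.mpr ⟨hmem, hgeq⟩
      rw [hp₀, Finset.mem_singleton] at hmem2
      apply hine
      rw [hi₀, ← hmem2]
    obtain ⟨n₀, hn₀⟩ := sum01 (Finset.univ.erase i₀) (fun i => x i l₀) hothers0
    have hcolsplit : ∑ i, x i l₀ = x i₀ l₀ + (n₀ : ℝ) := by
      rw [← hn₀, Finset.add_sum_erase Finset.univ (fun i => x i l₀) (Finset.mem_univ i₀)]
    have hx0 : 0 < x i₀ l₀ := hEpos p₀ hp₀E
    have hx1 : x i₀ l₀ < 1 := hElt1 p₀ hp₀E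
    have hregval : regS k₀ = x i₀ l₀ + ((∑ l ∈ T, q l + n₀ + n₂ : ℕ) : ℝ) := by
      rw [hswap, ← hsplitTN, hTsum, hNTsplit, hNTerase, hcolsplit]
      push_cast
      ring
    rcases hregt with h | h
    · exact pos_lt_one_not_nat_sub hx0 hx1 (qlow k₀) (∑ l ∈ T, q l + n₀ + n₂)
        (by rw [← h]; exact hregval)
    · exact pos_lt_one_not_nat_sub hx0 hx1 (qhigh k₀) (∑ l ∈ T, q l + n₀ + n₂)
        (by rw [← h]; exact hregval)
  -- get the flow
  obtain ⟨d, ⟨pstar, hdne⟩, hd0, hdf, hdg⟩ := exists_flow E hEne f g hfcard (fun b => by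
    cases b with
    | inl l => exact hgcard_col l
    | inr k => exact hgcard_reg k)
  -- conservation at tight rows
  have hdrow : ∀ i : I, rowT i → ∑ l, d (i, l) = 0 := by
    intro i hiT
    have hC : ({i} ×ˢ (Finset.univ : Finset O)) = Finset.univ.filter (fun p : I × O => p.1 = i) := by
      ext p
      simp only [Finset.mem_product, Finset.mem_singleton, Finset.mem_filter, Finset.mem_univ,
        true_and, and_true]
    have hsub : E.filter (fun p => f p = some i) ⊆ Finset.univ.filter (fun p : I × O => p.1 = i) := by
      intro p hp
      have := (hffib p i).mp (Finset.mem_filter.mp hp).2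
      simp [this.2]
    have hzero : ∀ p ∈ Finset.univ.filter (fun p : I × O => p.1 = i),
        p ∉ E.filter (fun p => f p = some i) → d p = 0 := by
      intro p hp hnp
      have hp1 : p.1 = i := (Finset.mem_filter.mp hp).2
      by_cases hpE : p ∈ E
      · exfalso
        exact hnp (Finset.mem_filter.mpr ⟨hpE, (hffib p i).mpr ⟨by rw [hp1]; exact hiT, hp1⟩⟩)
      · exact hd0 p hpE
    have h1 : ∑ p ∈ Finset.univ.filter (fun p : I × O => p.1 = i), d p = 0 := by
      rw [← Finset.sum_subset hsub hzero]
      exact hdf i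
    rw [← hC, Finset.sum_product, Finset.sum_singleton] at h1
    exact h1
  -- conservation at tight columns
  have hdcol : ∀ l : O, colT l → ∑ i, d (i, l) = 0 := by
    intro l hlT
    have hC : ((Finset.univ : Finset I) ×ˢ {l}) = Finset.univ.filter (fun p : I × O => p.2 = l) := by
      ext p
      simp only [Finset.mem_product, Finset.mem_singleton, Finset.mem_filter, Finset.mem_univ,
        true_and, and_true]
    have hsub : E.filter (fun p => g p = some (Sum.inl l)) ⊆
        Finset.univ.filter (fun p : I × O => p.2 = l) := by
      intro p hp
      have := (hgfib_col p l).mp (Finset.mem_filter.mp hp).2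
      simp [this.2]
    have hzero : ∀ p ∈ Finset.univ.filter (fun p : I × O => p.2 = l),
        p ∉ E.filter (fun p => g p = some (Sum.inl l)) → d p = 0 := by
      intro p hp hnp
      have hp2 : p.2 = l := (Finset.mem_filter.mp hp).2
      by_cases hpE : p ∈ E
      · exfalso
        exact hnp (Finset.mem_filter.mpr ⟨hpE, (hgfib_col p l).mpr ⟨by rw [hp2]; exact hlT, hp2⟩⟩)
      · exact hd0 p hpE
    have h1 : ∑ p ∈ Finset.univ.filter (fun p : I × O => p.2 = l), d p = 0 := by
      rw [← Finset.sum_subset hsub hzero]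
      exact hdg (Sum.inl l)
    rw [← hC, Finset.sum_product, Finset.sum_comm] at h1
    simpa using h1
  -- conservation at tight regions
  have hdreg : ∀ k : Fin K, regT k → ∑ l ∈ R k, ∑ i, d (i, l) = 0 := by
    intro k hkT
    set NT : Finset O := (R k).filter (fun l => ¬ colT l) with hNT
    have hsplitTN : ∑ l ∈ (R k).filter (fun l => colT l), ∑ i, d (i, l)
        + ∑ l ∈ NT, ∑ i, d (i, l) = ∑ l ∈ R k, ∑ i, d (i, l) :=
      Finset.sum_filter_add_sum_filter_not (R k) (fun l => colT l) _
    have hTzero : ∑ l ∈ (R k).filter (fun l => colT l), ∑ i, d (i, l) = 0 := by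
      apply Finset.sum_eq_zero
      intro l hl
      exact hdcol l (Finset.mem_filter.mp hl).2
    have hC : ((Finset.univ : Finset I) ×ˢ NT) =
        Finset.univ.filter (fun p : I × O => p.2 ∈ R k ∧ ¬ colT p.2) := by
      ext p
      simp only [Finset.mem_product, Finset.mem_filter, Finset.mem_univ, true_and, hNT]
    have hsub : E.filter (fun p => g p = some (Sum.inr k)) ⊆
        Finset.univ.filter (fun p : I × O => p.2 ∈ R k ∧ ¬ colT p.2) := by
      intro p hp
      have h2 := (hgfib_reg p k).mp (Finset.mem_filter.mp hp).2
      simp only [Finset.mem_filter, Finset.mem_univ, true_and]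
      refine ⟨?_, h2.1⟩
      rw [← h2.2.2]
      exact hregmem p.2
    have hzero : ∀ p ∈ Finset.univ.filter (fun p : I × O => p.2 ∈ R k ∧ ¬ colT p.2),
        p ∉ E.filter (fun p => g p = some (Sum.inr k)) → d p = 0 := by
      intro p hp hnp
      obtain ⟨hpR, hpnc⟩ := (Finset.mem_filter.mp hp).2
      by_cases hpE : p ∈ E
      · exfalso
        apply hnp
        refine Finset.mem_filter.mpr ⟨hpE, (hgfib_reg p k).mpr ⟨hpnc, ?_, hreguniq p.2 k hpR⟩⟩
        rw [hreguniq p.2 k hpR]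
        exact hkT
      · exact hd0 p hpE
    have h1 : ∑ p ∈ Finset.univ.filter (fun p : I × O => p.2 ∈ R k ∧ ¬ colT p.2), d p = 0 := by
      rw [← Finset.sum_subset hsub hzero]
      exact hdg (Sum.inr k)
    rw [← hC, Finset.sum_product] at h1
    rw [← hsplitTN, hTzero, zero_add, Finset.sum_comm]
    exact h1
  -- the perturbed points
  set D : ℝ → (I → O → ℝ) := fun t i l => x i l + t * d (i, l) with hD
  -- row sums of the perturbation
  have hDrow : ∀ t i, ∑ l, D t i l = ∑ l, x i l + t * ∑ l, d (i, l) := by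
    intro t i
    rw [Finset.mul_sum, ← Finset.sum_add_distrib]
  have hDcol : ∀ t l, ∑ i, D t i l = ∑ i, x i l + t * ∑ i, d (i, l) := by
    intro t l
    rw [Finset.mul_sum, ← Finset.sum_add_distrib]
  have hDreg : ∀ t k, ∑ i, ∑ l ∈ R k, D t i l
      = regS k + t * ∑ l ∈ R k, ∑ i, d (i, l) := by
    intro t k
    rw [hregS]
    simp only [hD]
    rw [Finset.sum_comm (s := Finset.univ) (t := R k) (f := fun i l => x i l + t * d (i, l)),
      Finset.sum_comm (s := Finset.univ) (t := R k) (f := fun i l => x i l)]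
    rw [Finset.mul_sum, ← Finset.sum_add_distrib]
    apply Finset.sum_congr rfl
    intro l _
    rw [Finset.mul_sum, ← Finset.sum_add_distrib]
  -- eventually in P
  have hev : ∀ᶠ t in nhds (0:ℝ), D t ∈ PSet8 I O q R qlow qhigh := by
    have hev1 : ∀ᶠ t in nhds (0:ℝ), ∀ i l, 0 ≤ D t i l := by
      rw [Filter.eventually_all]
      intro i
      rw [Filter.eventually_all]
      intro l
      by_cases hE' : (i, l) ∈ E
      · have hcont : Continuous (fun t : ℝ => x i l + t * d (i, l)) :=
          continuous_const.add (continuous_id.mul continuous_const)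
        have h0 : (0:ℝ) < x i l + 0 * d (i, l) := by
          simpa using hEpos (i, l) hE'
        have := (hcont.tendsto 0).eventually (eventually_gt_nhds h0)
        exact this.mono (fun t ht => le_of_lt ht)
      · apply Filter.Eventually.of_forall
        intro t
        simp only [hD]
        rw [hd0 (i, l) hE', mul_zero, add_zero]
        exact hpos i l
    have hev2 : ∀ᶠ t in nhds (0:ℝ), ∀ i, ∑ l, D t i l ≤ 1 := by
      rw [Filter.eventually_all]
      intro i
      by_cases hiT : rowT i
      · apply Filter.Eventually.of_forall
        intro t
        rw [hDrow, hdrow i hiT, mul_zero, add_zero]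
        exact hrow i
      · have hlt : ∑ l, x i l < 1 := lt_of_le_of_ne (hrow i) hiT
        have hcont : Continuous (fun t : ℝ => ∑ l, x i l + t * ∑ l, d (i, l)) :=
          continuous_const.add (continuous_id.mul continuous_const)
        have h0 : (∑ l, x i l) + 0 * ∑ l, d (i, l) < 1 := by simpa using hlt
        have := (hcont.tendsto 0).eventually (eventually_lt_nhds h0)
        exact this.mono (fun t ht => by rw [hDrow]; exact le_of_lt ht)
    have hev3 : ∀ᶠ t in nhds (0:ℝ), ∀ l, ∑ i, D t i l ≤ (q l : ℝ) := by
      rw [Filter.eventually_all]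
      intro l
      by_cases hlT : colT l
      · apply Filter.Eventually.of_forall
        intro t
        rw [hDcol, hdcol l hlT, mul_zero, add_zero]
        exact hcol l
      · have hlt : ∑ i, x i l < (q l : ℝ) := lt_of_le_of_ne (hcol l) hlT
        have hcont : Continuous (fun t : ℝ => ∑ i, x i l + t * ∑ i, d (i, l)) :=
          continuous_const.add (continuous_id.mul continuous_const)
        have h0 : (∑ i, x i l) + 0 * ∑ i, d (i, l) < (q l : ℝ) := by simpa using hlt
        have := (hcont.tendsto 0).eventually (eventually_lt_nhds h0)
        exact this.mono (fun t ht => by rw [hDcol]; exact le_of_lt ht)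
    have hev4 : ∀ᶠ t in nhds (0:ℝ), ∀ k, (qlow k : ℝ) ≤ ∑ i, ∑ l ∈ R k, D t i l ∧
        ∑ i, ∑ l ∈ R k, D t i l ≤ (qhigh k : ℝ) := by
      rw [Filter.eventually_all]
      intro k
      by_cases hkT : regT k
      · apply Filter.Eventually.of_forall
        intro t
        rw [hDreg, hdreg k hkT, mul_zero, add_zero]
        exact hreg k
      · simp only [hregT] at hkT
        push_neg at hkT
        obtain ⟨hk1, hk2⟩ := hkT
        have hlow : (qlow k : ℝ) < regS k := lt_of_le_of_ne (hreg k).1 (Ne.symm hk1)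
        have hhigh : regS k < (qhigh k : ℝ) := lt_of_le_of_ne (hreg k).2 hk2
        have hcont : Continuous (fun t : ℝ => regS k + t * ∑ l ∈ R k, ∑ i, d (i, l)) :=
          continuous_const.add (continuous_id.mul continuous_const)
        have h0l : (qlow k : ℝ) < regS k + 0 * ∑ l ∈ R k, ∑ i, d (i, l) := by simpa using hlow
        have h0h : regS k + 0 * ∑ l ∈ R k, ∑ i, d (i, l) < (qhigh k : ℝ) := by simpa using hhigh
        have hl := (hcont.tendsto 0).eventually (eventually_gt_nhds h0l)
        have hh := (hcont.tendsto 0).eventually (eventually_lt_nhds h0h)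
        refine (hl.and hh).mono (fun t ⟨ht1, ht2⟩ => ?_)
        rw [hDreg]
        exact ⟨le_of_lt ht1, le_of_lt ht2⟩
    exact hev1.and (hev2.and (hev3.and hev4))
  obtain ⟨δ, hδpos, hδ⟩ := Metric.eventually_nhds_iff.mp hev
  have hd1 : D (δ/2) ∈ PSet8 I O q R qlow qhigh := by
    apply hδ
    rw [Real.dist_eq]
    rw [sub_zero, abs_of_pos (by linarith)]
    linarith
  have hd2 : D (-(δ/2)) ∈ PSet8 I O q R qlow qhigh := by
    apply hδ
    rw [Real.dist_eq, sub_zero, abs_of_neg (by linarith)]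
    linarith
  have hseg : x ∈ openSegment ℝ (D (δ/2)) (D (-(δ/2))) := by
    refine ⟨1/2, 1/2, by norm_num, by norm_num, by norm_num, ?_⟩
    funext i
    funext l
    simp only [hD, Pi.add_apply, Pi.smul_apply, smul_eq_mul]
    ring
  have heq := hxext hd1 hd2 hseg
  have : D (δ/2) pstar.1 pstar.2 = x pstar.1 pstar.2 := by rw [heq]
  simp only [hD] at this
  have : (δ/2) * d (pstar.1, pstar.2) = 0 := by linarith
  rcases mul_eq_zero.mp this with h | h
  · linarith
  · exact hdne h

def DSet8 (I O : Type*) [Fintype I] [Fintype O] {K : ℕ} (q : O → ℕ) (R : Fin K → Finset O)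
    (qlow qhigh : Fin K → ℕ) : Set (I → O → ℝ) :=
  {x | (∀ i l, x i l = 0 ∨ x i l = 1) ∧
      (∀ i, ∑ l, x i l ≤ 1) ∧
      (∀ l, ∑ i, x i l ≤ (q l : ℝ)) ∧
      (∀ k, (qlow k : ℝ) ≤ ∑ i, ∑ l ∈ R k, x i l ∧
        ∑ i, ∑ l ∈ R k, x i l ≤ (qhigh k : ℝ))}

section Topo
variable {I O : Type*} [Fintype I] [Fintype O] [DecidableEq O] {K : ℕ}
  (q : O → ℕ) (R : Fin K → Finset O) (qlow qhigh : Fin K → ℕ)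

lemma ceval (i : I) (l : O) : Continuous fun x : I → O → ℝ => x i l :=
  (continuous_apply l).comp (continuous_apply i)

lemma PSet8_isClosed : IsClosed (PSet8 I O q R qlow qhigh) := by
  have h1 : PSet8 I O q R qlow qhigh =
      (⋂ i, ⋂ l, {x : I → O → ℝ | 0 ≤ x i l}) ∩
      ((⋂ i, {x : I → O → ℝ | ∑ l, x i l ≤ 1}) ∩
      ((⋂ l, {x : I → O → ℝ | ∑ i, x i l ≤ (q l : ℝ)}) ∩
      (⋂ k, {x : I → O → ℝ | (qlow k : ℝ) ≤ ∑ i, ∑ l ∈ R k, x i l} ∩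
        {x : I → O → ℝ | ∑ i, ∑ l ∈ R k, x i l ≤ (qhigh k : ℝ)}))) := by
    ext x
    simp only [PSet8, Set.mem_inter_iff, Set.mem_iInter, Set.mem_setOf_eq]
  rw [h1]
  have crow : ∀ i : I, Continuous fun x : I → O → ℝ => ∑ l, x i l :=
    fun i => continuous_finset_sum _ (fun l _ => ceval i l)
  have ccol : ∀ l : O, Continuous fun x : I → O → ℝ => ∑ i, x i l :=
    fun l => continuous_finset_sum _ (fun i _ => ceval i l)
  have creg : ∀ k : Fin K, Continuous fun x : I → O → ℝ => ∑ i, ∑ l ∈ R k, x i l :=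
    fun k => continuous_finset_sum _ (fun i _ => continuous_finset_sum _ (fun l _ => ceval i l))
  refine IsClosed.inter (isClosed_iInter fun i => isClosed_iInter fun l =>
      isClosed_le continuous_const (ceval i l)) (IsClosed.inter
      (isClosed_iInter fun i => isClosed_le (crow i) continuous_const)
      (IsClosed.inter (isClosed_iInter fun l => isClosed_le (ccol l) continuous_const)
      (isClosed_iInter fun k => IsClosed.inter
        (isClosed_le continuous_const (creg k)) (isClosed_le (creg k) continuous_const))))

lemma PSet8_isCompact : IsCompact (PSet8 I O q R qlow qhigh) := by
  have hbox : IsCompact (Set.univ.pi fun _ : I => Set.univ.pi fun _ : O => Set.Icc (0:ℝ) 1) :=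
    isCompact_univ_pi (fun _ => isCompact_univ_pi (fun _ => isCompact_Icc))
  apply hbox.of_isClosed_subset (PSet8_isClosed q R qlow qhigh)
  intro x hx
  obtain ⟨hpos, hrow, _, _⟩ := hx
  rw [Set.mem_univ_pi]
  intro i
  rw [Set.mem_univ_pi]
  intro l
  refine ⟨hpos i l, ?_⟩
  calc x i l ≤ ∑ l', x i l' :=
    Finset.single_le_sum (fun l' _ => hpos i l') (Finset.mem_univ l)
  _ ≤ 1 := hrow i

lemma PSet8_convex : Convex ℝ (PSet8 I O q R qlow qhigh) := by
  intro x hx y hy a b ha hb hab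
  obtain ⟨hpos, hrow, hcol, hreg⟩ := hx
  obtain ⟨hpos', hrow', hcol', hreg'⟩ := hy
  have happ : ∀ i l, (a • x + b • y) i l = a * x i l + b * y i l := by
    intro i l; simp [Pi.add_apply, Pi.smul_apply]
  refine ⟨?_, ?_, ?_, ?_⟩
  · intro i l
    rw [happ]
    have := mul_nonneg ha (hpos i l)
    have := mul_nonneg hb (hpos' i l)
    linarith
  · intro i
    have h1 : ∑ l, (a • x + b • y) i l = a * ∑ l, x i l + b * ∑ l, y i l := by
      simp only [happ]
      rw [Finset.sum_add_distrib, Finset.mul_sum, Finset.mul_sum]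
    rw [h1]
    have h2 := mul_le_mul_of_nonneg_left (hrow i) ha
    have h3 := mul_le_mul_of_nonneg_left (hrow' i) hb
    nlinarith
  · intro l
    have h1 : ∑ i, (a • x + b • y) i l = a * ∑ i, x i l + b * ∑ i, y i l := by
      simp only [happ]
      rw [Finset.sum_add_distrib, Finset.mul_sum, Finset.mul_sum]
    rw [h1]
    have h2 := mul_le_mul_of_nonneg_left (hcol l) ha
    have h3 := mul_le_mul_of_nonneg_left (hcol' l) hb
    nlinarith
  · intro k
    have h1 : ∑ i, ∑ l ∈ R k, (a • x + b • y) i l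
        = a * ∑ i, ∑ l ∈ R k, x i l + b * ∑ i, ∑ l ∈ R k, y i l := by
      simp only [happ]
      rw [Finset.mul_sum, Finset.mul_sum, ← Finset.sum_add_distrib]
      apply Finset.sum_congr rfl
      intro i _
      rw [Finset.sum_add_distrib, Finset.mul_sum, Finset.mul_sum]
    rw [h1]
    constructor
    · have h2 := mul_le_mul_of_nonneg_left (hreg k).1 ha
      have h3 := mul_le_mul_of_nonneg_left (hreg' k).1 hb
      nlinarith
    · have h2 := mul_le_mul_of_nonneg_left (hreg k).2 ha
      have h3 := mul_le_mul_of_nonneg_left (hreg' k).2 hb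
      nlinarith

lemma DSet8_finite : (DSet8 I O q R qlow qhigh).Finite := by
  have h2 : ∀ _i : I, (Set.univ.pi fun _ : O => ({0,1} : Set ℝ)).Finite :=
    fun _ => Set.Finite.pi (fun _ => Set.toFinite _)
  have h3 : (Set.univ.pi fun _ : I => Set.univ.pi fun _ : O => ({0,1} : Set ℝ)).Finite :=
    Set.Finite.pi (fun i => h2 i)
  apply Set.Finite.subset h3
  intro x hx
  rw [Set.mem_univ_pi]
  intro i
  rw [Set.mem_univ_pi]
  intro l
  rcases hx.1 i l with h | h
  · exact Or.inl h
  · exact Or.inr (by simpa using h)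

lemma PSet8_sub_hull (hRdisj : ∀ k k', k ≠ k' → Disjoint (R k) (R k'))
    (hRcover : ∀ l : O, ∃ k, l ∈ R k) :
    PSet8 I O q R qlow qhigh ⊆ convexHull ℝ (DSet8 I O q R qlow qhigh) := by
  have hKM := closure_convexHull_extremePoints (PSet8_isCompact (I := I) (O := O) q R qlow qhigh)
    (PSet8_convex (I := I) (O := O) q R qlow qhigh)
  have hext : Set.extremePoints ℝ (PSet8 I O q R qlow qhigh) ⊆ DSet8 I O q R qlow qhigh := by
    intro x hx
    have h01 := extreme_01 q R hRdisj hRcover qlow qhigh x hx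
    obtain ⟨_, hrow, hcol, hreg⟩ := hx.1
    exact ⟨h01, hrow, hcol, hreg⟩
  calc PSet8 I O q R qlow qhigh
      = closure (convexHull ℝ (Set.extremePoints ℝ (PSet8 I O q R qlow qhigh))) := hKM.symm
  _ ⊆ closure (convexHull ℝ (DSet8 I O q R qlow qhigh)) :=
      closure_mono (convexHull_mono hext)
  _ = convexHull ℝ (DSet8 I O q R qlow qhigh) :=
      IsClosed.closure_eq (((DSet8_finite q R qlow qhigh).isCompact_convexHull ℝ).isClosed)

end Topo

lemma qbound_aux {K : ℕ} (N : ℕ) (qlow qhigh : Fin K → ℕ) (q' : Finset (Fin K) → ℤ)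
    (hq'single : ∀ k, q' {k} =
      min (qhigh k : ℤ) ((N : ℤ) - ∑ k' ∈ univ.erase k, (qlow k' : ℤ)))
    (hq'rec : ∀ S : Finset (Fin K), ∀ hS : 2 ≤ S.card,
      q' S = min (S.inf' (Finset.card_pos.mp (by omega)) fun k => q' (S.erase k) + q' {k})
        ((N : ℤ) - ∑ k' ∈ Sᶜ, (qlow k' : ℤ)))
    (s : Fin K → ℝ) (hlow : ∀ k, (qlow k : ℝ) ≤ s k) (hhigh : ∀ k, s k ≤ (qhigh k : ℝ))
    (htot : ∑ k, s k ≤ (N : ℝ)) :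
    ∀ S : Finset (Fin K), S.Nonempty → ∑ k ∈ S, s k ≤ ((q' S : ℤ) : ℝ) := by
  intro S
  induction S using Finset.strongInductionOn with
  | _ S ih =>
    intro hSne
    have hcard1 : 1 ≤ S.card := Finset.one_le_card.mpr hSne
    rcases eq_or_lt_of_le hcard1 with h1 | h2
    · -- singleton case
      obtain ⟨k, hk⟩ := Finset.card_eq_one.mp h1.symm
      subst hk
      rw [Finset.sum_singleton, hq'single k]
      push_cast
      rw [le_min_iff]
      constructor
      · exact hhigh k
      · have hsplit : s k + ∑ k' ∈ univ.erase k, s k' = ∑ k', s k' :=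
          Finset.add_sum_erase Finset.univ s (Finset.mem_univ k)
        have hmon : ∑ k' ∈ univ.erase k, (qlow k' : ℝ) ≤ ∑ k' ∈ univ.erase k, s k' :=
          Finset.sum_le_sum (fun k' _ => hlow k')
        linarith
    · -- card ≥ 2
      have hS2 : 2 ≤ S.card := h2
      rw [hq'rec S hS2]
      push_cast [Int.cast_min]
      rw [le_min_iff]
      constructor
      · obtain ⟨k₀, hk₀mem, hk₀⟩ := Finset.exists_mem_eq_inf' hSne
          (fun k => q' (S.erase k) + q' {k})
        rw [hk₀]
        have hsplit : s k₀ + ∑ k ∈ S.erase k₀, s k = ∑ k ∈ S, s k :=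
          Finset.add_sum_erase S s hk₀mem
        have herase_ss : S.erase k₀ ⊂ S := Finset.erase_ssubset hk₀mem
        have herase_ne : (S.erase k₀).Nonempty := by
          rw [← Finset.card_pos, Finset.card_erase_of_mem hk₀mem]
          omega
        have h1 := ih (S.erase k₀) herase_ss herase_ne
        have hsingle_ss : ({k₀} : Finset (Fin K)) ⊂ S := by
          rw [Finset.ssubset_iff_of_subset (Finset.singleton_subset_iff.mpr hk₀mem)]
          have : ∃ k₁ ∈ S, k₁ ≠ k₀ := Finset.exists_mem_ne (by omega) k₀
          obtain ⟨k₁, hk₁, hk₁ne⟩ := this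
          exact ⟨k₁, hk₁, by simp [hk₁ne]⟩
        have h2' := ih {k₀} hsingle_ss ⟨k₀, Finset.mem_singleton_self k₀⟩
        rw [Finset.sum_singleton] at h2'
        push_cast
        linarith
      · have hsplit : ∑ k ∈ S, s k + ∑ k ∈ Sᶜ, s k = ∑ k, s k :=
          Finset.sum_add_sum_compl S s
        have hmon : ∑ k' ∈ Sᶜ, (qlow k' : ℝ) ≤ ∑ k' ∈ Sᶜ, s k' :=
          Finset.sum_le_sum (fun k' _ => hlow k')
        push_cast
        linarith

lemma sum_partition {O : Type*} [Fintype O] [DecidableEq O] {K : ℕ} (R : Fin K → Finset O)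
    (hRdisj : ∀ k k', k ≠ k' → Disjoint (R k) (R k'))
    (hRcover : ∀ l : O, ∃ k, l ∈ R k) (v : O → ℝ) :
    ∑ k, ∑ l ∈ R k, v l = ∑ l, v l := by
  have huniv : Finset.univ.biUnion R = Finset.univ := by
    ext l
    simp only [Finset.mem_biUnion, Finset.mem_univ, true_and, iff_true]
    exact hRcover l
  rw [← Finset.sum_biUnion (fun k _ k' _ hkk' => hRdisj k k' hkk'), huniv]

lemma raise_aux {I O : Type*} [Fintype I] [Fintype O] [DecidableEq I] [DecidableEq O] {K : ℕ}
    (q : O → ℕ) (R : Fin K → Finset O)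
    (hRdisj : ∀ k k', k ≠ k' → Disjoint (R k) (R k'))
    (hRcover : ∀ l : O, ∃ k, l ∈ R k)
    (qlow qhigh : Fin K → ℕ)
    (C : Fin K → ℝ) (hCq : ∀ k, C k ≤ (qhigh k : ℝ)) (hCl : ∀ k, (qlow k : ℝ) ≤ C k)
    (hCN : ∀ k, (qlow k : ℝ) + ∑ k' ∈ univ.erase k, C k' ≤ (Fintype.card I : ℝ))
    (hN2 : ∀ k, qlow k ≤ ∑ l ∈ R k, q l) :
    ∀ n : ℕ, ∀ x : I → O → ℝ,
      (∀ i l, 0 ≤ x i l) → (∀ i, ∑ l, x i l ≤ 1) → (∀ l, ∑ i, x i l ≤ (q l : ℝ)) →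
      (∀ k, ∑ i, ∑ l ∈ R k, x i l ≤ C k) →
      ((univ.filter (fun i : I => ∑ l, x i l < 1)).card
        + (univ.filter (fun l : O => ∑ i, x i l < (q l : ℝ))).card
        + (univ.filter (fun k : Fin K => ∑ i, ∑ l ∈ R k, x i l < (qlow k : ℝ))).card ≤ n) →
      ∃ y ∈ PSet8 I O q R qlow qhigh, ∀ i l, x i l ≤ y i l := by
  intro n
  induction n with
  | zero =>
    intro x hpos hrow hcol hC hμ
    refine ⟨x, ⟨hpos, hrow, hcol, fun k => ⟨?_, le_trans (hC k) (hCq k)⟩⟩, fun i l => le_refl _⟩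
    by_contra hk
    push_neg at hk
    have : k ∈ univ.filter (fun k : Fin K => ∑ i, ∑ l ∈ R k, x i l < (qlow k : ℝ)) := by
      simp only [Finset.mem_filter, Finset.mem_univ, true_and]
      exact hk
    have := Finset.card_pos.mpr ⟨k, this⟩
    omega
  | succ n ih =>
    intro x hpos hrow hcol hC hμ
    by_cases hdef : ∀ k, (qlow k : ℝ) ≤ ∑ i, ∑ l ∈ R k, x i l
    · exact ⟨x, ⟨hpos, hrow, hcol, fun k => ⟨hdef k, le_trans (hC k) (hCq k)⟩⟩,
        fun i l => le_refl _⟩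
    push_neg at hdef
    obtain ⟨k₀, hk₀⟩ := hdef
    -- total mass is less than the number of doctors
    have hreg_total : ∑ k, ∑ i, ∑ l ∈ R k, x i l = ∑ i, ∑ l, x i l := by
      rw [Finset.sum_comm]
      apply Finset.sum_congr rfl
      intro i _
      exact sum_partition R hRdisj hRcover (fun l => x i l)
    have htotlt : ∑ i, ∑ l, x i l < (Fintype.card I : ℝ) := by
      rw [← hreg_total]
      have hsplit : (∑ i, ∑ l ∈ R k₀, x i l) + ∑ k ∈ univ.erase k₀, ∑ i, ∑ l ∈ R k, x i l
          = ∑ k, ∑ i, ∑ l ∈ R k, x i l :=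
        Finset.add_sum_erase Finset.univ (fun k => ∑ i, ∑ l ∈ R k, x i l) (Finset.mem_univ k₀)
      have hmon : ∑ k ∈ univ.erase k₀, ∑ i, ∑ l ∈ R k, x i l ≤ ∑ k ∈ univ.erase k₀, C k :=
        Finset.sum_le_sum (fun k _ => hC k)
      have := hCN k₀
      linarith
    -- a doctor with slack
    have hrowex : ∃ i₀, ∑ l, x i₀ l < 1 := by
      by_contra h
      push_neg at h
      have : (Fintype.card I : ℝ) ≤ ∑ i, ∑ l, x i l := by
        calc (Fintype.card I : ℝ) = ∑ _i : I, (1:ℝ) := by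
              rw [Finset.sum_const, nsmul_eq_mul, mul_one, Fintype.card]
        _ ≤ ∑ i, ∑ l, x i l := Finset.sum_le_sum (fun i _ => h i)
      linarith
    obtain ⟨i₀, hi₀⟩ := hrowex
    -- a hospital in region k₀ with slack
    have hcolex : ∃ l₀ ∈ R k₀, ∑ i, x i l₀ < (q l₀ : ℝ) := by
      by_contra h
      push_neg at h
      have h1 : ((∑ l ∈ R k₀, q l : ℕ) : ℝ) ≤ ∑ l ∈ R k₀, ∑ i, x i l := by
        push_cast
        exact Finset.sum_le_sum (fun l hl => h l hl)
      have h2 : (qlow k₀ : ℝ) ≤ ((∑ l ∈ R k₀, q l : ℕ) : ℝ) := by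
        exact_mod_cast hN2 k₀
      rw [Finset.sum_comm] at h1
      linarith
    obtain ⟨l₀, hl₀R, hl₀⟩ := hcolex
    set δ : ℝ := min (min (1 - ∑ l, x i₀ l) ((q l₀ : ℝ) - ∑ i, x i l₀))
      ((qlow k₀ : ℝ) - ∑ i, ∑ l ∈ R k₀, x i l) with hδ
    have hδpos : 0 < δ := by
      apply lt_min
      · apply lt_min <;> linarith
      · linarith
    set x' : I → O → ℝ := fun i l => x i l + (if i = i₀ then (if l = l₀ then δ else 0) else 0)
      with hx'
    have hle : ∀ i l, x i l ≤ x' i l := by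
      intro i l
      simp only [hx']
      have : (0:ℝ) ≤ (if i = i₀ then (if l = l₀ then δ else 0) else 0) := by
        split <;> [skip; rfl]
        split <;> [exact le_of_lt hδpos; rfl]
      linarith
    have hrow' : ∀ i, ∑ l, x' i l = ∑ l, x i l + (if i = i₀ then δ else 0) := by
      intro i
      simp only [hx']
      rw [Finset.sum_add_distrib]
      congr 1
      by_cases h : i = i₀
      · simp only [if_pos h]
        rw [Finset.sum_ite_eq' Finset.univ l₀ (fun _ => δ)]
        simp
      · simp only [if_neg h]
        simp
    have hcol' : ∀ l, ∑ i, x' i l = ∑ i, x i l + (if l = l₀ then δ else 0) := by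
      intro l
      simp only [hx']
      rw [Finset.sum_add_distrib]
      congr 1
      by_cases h : l = l₀
      · simp only [if_pos h]
        rw [Finset.sum_ite_eq' Finset.univ i₀ (fun _ => δ)]
        simp
      · simp only [if_neg h]
        simp
    have hl₀reg : ∀ k, l₀ ∈ R k ↔ k = k₀ := by
      intro k
      constructor
      · intro hl
        by_contra hne
        exact Finset.disjoint_left.mp (hRdisj k k₀ hne) hl hl₀R
      · rintro rfl; exact hl₀R
    have hreg' : ∀ k, ∑ i, ∑ l ∈ R k, x' i l
        = ∑ i, ∑ l ∈ R k, x i l + (if k = k₀ then δ else 0) := by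
      intro k
      simp only [hx']
      rw [Finset.sum_comm (f := fun i l => x i l +
        (if i = i₀ then (if l = l₀ then δ else 0) else 0))]
      rw [Finset.sum_comm (s := Finset.univ) (t := R k) (f := fun i l => x i l)]
      have : ∀ l ∈ R k, ∑ i, (x i l + (if i = i₀ then (if l = l₀ then δ else 0) else 0))
          = ∑ i, x i l + (if l = l₀ then δ else 0) := by
        intro l _
        rw [Finset.sum_add_distrib]
        congr 1
        rw [Finset.sum_ite_eq' Finset.univ i₀ (fun _ => (if l = l₀ then δ else 0))]
        simp
      rw [Finset.sum_congr rfl this, Finset.sum_add_distrib]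
      congr 1
      rw [Finset.sum_ite_eq' (R k) l₀ (fun _ => δ)]
      by_cases h : k = k₀
      · rw [if_pos ((hl₀reg k).mpr h), if_pos h]
      · rw [if_neg (fun hh => h ((hl₀reg k).mp hh)), if_neg h]
    -- new point still satisfies the constraints
    have hpos2 : ∀ i l, 0 ≤ x' i l := fun i l => le_trans (hpos i l) (hle i l)
    have hrow2 : ∀ i, ∑ l, x' i l ≤ 1 := by
      intro i
      rw [hrow' i]
      by_cases h : i = i₀
      · subst h
        have : δ ≤ 1 - ∑ l, x i l := le_trans (min_le_left _ _) (min_le_left _ _)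
        rw [if_pos rfl]
        linarith
      · rw [if_neg h]
        have := hrow i
        linarith
    have hcol2 : ∀ l, ∑ i, x' i l ≤ (q l : ℝ) := by
      intro l
      rw [hcol' l]
      by_cases h : l = l₀
      · subst h
        have : δ ≤ (q l : ℝ) - ∑ i, x i l := le_trans (min_le_left _ _) (min_le_right _ _)
        rw [if_pos rfl]
        linarith
      · rw [if_neg h]
        have := hcol l
        linarith
    have hreg2 : ∀ k, ∑ i, ∑ l ∈ R k, x' i l ≤ C k := by
      intro k
      rw [hreg' k]
      by_cases h : k = k₀
      · subst h
        have h1 : δ ≤ (qlow k : ℝ) - ∑ i, ∑ l ∈ R k, x i l := min_le_right _ _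
        have h2 := hCl k
        rw [if_pos rfl]
        linarith
      · rw [if_neg h]
        have := hC k
        linarith
    -- measure decreases
    have hsub1 : univ.filter (fun i : I => ∑ l, x' i l < 1)
        ⊆ univ.filter (fun i : I => ∑ l, x i l < 1) := by
      intro i hi
      simp only [Finset.mem_filter, Finset.mem_univ, true_and] at hi ⊢
      have h1 : ∑ l, x i l ≤ ∑ l, x' i l := Finset.sum_le_sum (fun l _ => hle i l)
      linarith
    have hsub2 : univ.filter (fun l : O => ∑ i, x' i l < (q l : ℝ))
        ⊆ univ.filter (fun l : O => ∑ i, x i l < (q l : ℝ)) := by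
      intro l hl
      simp only [Finset.mem_filter, Finset.mem_univ, true_and] at hl ⊢
      have h1 : ∑ i, x i l ≤ ∑ i, x' i l := Finset.sum_le_sum (fun i _ => hle i l)
      linarith
    have hsub3 : univ.filter (fun k : Fin K => ∑ i, ∑ l ∈ R k, x' i l < (qlow k : ℝ))
        ⊆ univ.filter (fun k : Fin K => ∑ i, ∑ l ∈ R k, x i l < (qlow k : ℝ)) := by
      intro k hk
      simp only [Finset.mem_filter, Finset.mem_univ, true_and] at hk ⊢
      have h1 : ∑ i, ∑ l ∈ R k, x i l ≤ ∑ i, ∑ l ∈ R k, x' i l :=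
        Finset.sum_le_sum (fun i _ => Finset.sum_le_sum (fun l _ => hle i l))
      linarith
    have hmeas : (univ.filter (fun i : I => ∑ l, x' i l < 1)).card
        + (univ.filter (fun l : O => ∑ i, x' i l < (q l : ℝ))).card
        + (univ.filter (fun k : Fin K => ∑ i, ∑ l ∈ R k, x' i l < (qlow k : ℝ))).card ≤ n := by
      have hc1 := Finset.card_le_card hsub1
      have hc2 := Finset.card_le_card hsub2
      have hc3 := Finset.card_le_card hsub3
      -- one of the three minimum cases gives a strict decrease
      rcases min_cases (min (1 - ∑ l, x i₀ l) ((q l₀ : ℝ) - ∑ i, x i l₀))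
        ((qlow k₀ : ℝ) - ∑ i, ∑ l ∈ R k₀, x i l) with ⟨heq, _⟩ | ⟨heq, _⟩
      · rcases min_cases (1 - ∑ l, x i₀ l) ((q l₀ : ℝ) - ∑ i, x i l₀) with
          ⟨heq2, _⟩ | ⟨heq2, _⟩
        · -- row i₀ becomes tight
          have hstrict : (univ.filter (fun i : I => ∑ l, x' i l < 1)).card
              < (univ.filter (fun i : I => ∑ l, x i l < 1)).card := by
            apply Finset.card_lt_card
            rw [Finset.ssubset_iff_of_subset hsub1]
            refine ⟨i₀, ?_, ?_⟩
            · simp only [Finset.mem_filter, Finset.mem_univ, true_and]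
              exact hi₀
            · simp only [Finset.mem_filter, Finset.mem_univ, true_and, not_lt]
              rw [hrow' i₀, if_pos rfl, hδ, heq, heq2]
              linarith
          omega
        · -- column l₀ becomes tight
          have hstrict : (univ.filter (fun l : O => ∑ i, x' i l < (q l : ℝ))).card
              < (univ.filter (fun l : O => ∑ i, x i l < (q l : ℝ))).card := by
            apply Finset.card_lt_card
            rw [Finset.ssubset_iff_of_subset hsub2]
            refine ⟨l₀, ?_, ?_⟩
            · simp only [Finset.mem_filter, Finset.mem_univ, true_and]
              exact hl₀
            · simp only [Finset.mem_filter, Finset.mem_univ, true_and, not_lt]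
              rw [hcol' l₀, if_pos rfl, hδ, heq, heq2]
              linarith
          omega
      · -- region k₀ reaches its floor
        have hstrict : (univ.filter (fun k : Fin K =>
              ∑ i, ∑ l ∈ R k, x' i l < (qlow k : ℝ))).card
            < (univ.filter (fun k : Fin K => ∑ i, ∑ l ∈ R k, x i l < (qlow k : ℝ))).card := by
          apply Finset.card_lt_card
          rw [Finset.ssubset_iff_of_subset hsub3]
          refine ⟨k₀, ?_, ?_⟩
          · simp only [Finset.mem_filter, Finset.mem_univ, true_and]
            exact hk₀
          · simp only [Finset.mem_filter, Finset.mem_univ, true_and, not_lt]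
            rw [hreg' k₀, if_pos rfl, hδ, heq]
            linarith
        omega
    obtain ⟨y, hyP, hxy⟩ := ih x' hpos2 hrow2 hcol2 hreg2 hmeas
    exact ⟨y, hyP, fun i l => le_trans (hle i l) (hxy i l)⟩


lemma sum_biUnion_regions {I O : Type*} [Fintype I] [Fintype O] [DecidableEq O] {K : ℕ}
    (R : Fin K → Finset O)
    (hRdisj : ∀ k k', k ≠ k' → Disjoint (R k) (R k'))
    (y : I → O → ℝ) (S : Finset (Fin K)) :
    ∑ i, ∑ l ∈ S.biUnion R, y i l = ∑ k ∈ S, ∑ i, ∑ l ∈ R k, y i l := by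
  have h1 : ∀ i : I, ∑ l ∈ S.biUnion R, y i l = ∑ k ∈ S, ∑ l ∈ R k, y i l :=
    fun i => Finset.sum_biUnion (fun k _ k' _ h => hRdisj k k' h)
  rw [Finset.sum_congr rfl (fun i _ => h1 i), Finset.sum_comm]

lemma q'_le_aux {K : ℕ} (N : ℕ) (qlow qhigh : Fin K → ℕ) (q' : Finset (Fin K) → ℤ)
    (hq'single : ∀ k, q' {k} =
      min (qhigh k : ℤ) ((N : ℤ) - ∑ k' ∈ univ.erase k, (qlow k' : ℤ)))
    (hq'rec : ∀ S : Finset (Fin K), ∀ hS : 2 ≤ S.card,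
      q' S = min (S.inf' (Finset.card_pos.mp (by omega)) fun k => q' (S.erase k) + q' {k})
        ((N : ℤ) - ∑ k' ∈ Sᶜ, (qlow k' : ℤ))) :
    ∀ T : Finset (Fin K), T.Nonempty →
      ((q' T : ℤ) : ℝ) ≤ (N : ℝ) - ∑ k' ∈ Tᶜ, (qlow k' : ℝ) := by
  intro T hT
  have hcard1 : 1 ≤ T.card := Finset.one_le_card.mpr hT
  rcases eq_or_lt_of_le hcard1 with h1 | h2
  · obtain ⟨k, hk⟩ := Finset.card_eq_one.mp h1.symm
    subst hk
    have hcompl : ({k} : Finset (Fin K))ᶜ = univ.erase k := by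
      ext k'
      simp [Finset.mem_compl, Finset.mem_erase]
    rw [hq'single k, hcompl]
    have := min_le_right (qhigh k : ℤ) ((N : ℤ) - ∑ k' ∈ univ.erase k, (qlow k' : ℤ))
    calc ((min (qhigh k : ℤ) ((N : ℤ) - ∑ k' ∈ univ.erase k, (qlow k' : ℤ)) : ℤ) : ℝ)
        ≤ (((N : ℤ) - ∑ k' ∈ univ.erase k, (qlow k' : ℤ) : ℤ) : ℝ) := by exact_mod_cast this
    _ = (N : ℝ) - ∑ k' ∈ univ.erase k, (qlow k' : ℝ) := by push_cast; ring
  · rw [hq'rec T h2]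
    have := min_le_right (T.inf' (Finset.card_pos.mp (by omega))
      fun k => q' (T.erase k) + q' {k}) ((N : ℤ) - ∑ k' ∈ Tᶜ, (qlow k' : ℤ))
    calc ((min (T.inf' (Finset.card_pos.mp (by omega)) fun k => q' (T.erase k) + q' {k})
          ((N : ℤ) - ∑ k' ∈ Tᶜ, (qlow k' : ℤ)) : ℤ) : ℝ)
        ≤ (((N : ℤ) - ∑ k' ∈ Tᶜ, (qlow k' : ℤ) : ℤ) : ℝ) := by exact_mod_cast this
    _ = (N : ℝ) - ∑ k' ∈ Tᶜ, (qlow k' : ℝ) := by push_cast; ring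

theorem statement8 {I O : Type*} [Fintype I] [Fintype O] [DecidableEq O] (K : ℕ)
    (q : O → ℕ) (hq : ∀ l, 0 < q l)
    (R : Fin K → Finset O) (hRne : ∀ k, (R k).Nonempty)
    (hRdisj : ∀ k k', k ≠ k' → Disjoint (R k) (R k'))
    (hRcover : ∀ l : O, ∃ k, l ∈ R k)
    (qlow qhigh : Fin K → ℕ) (hquo : ∀ k, qlow k ≤ qhigh k)
    (hN1 : ∑ k, qlow k ≤ Fintype.card I)
    (hN2 : ∀ k, qlow k ≤ ∑ l ∈ R k, q l)
    (hN3 : Fintype.card I ≤ ∑ l, q l)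
    (𝒞 : Set (I → O → ℝ))
    (h𝒞 : 𝒞 = convexHull ℝ {x : I → O → ℝ |
      (∀ i l, x i l = 0 ∨ x i l = 1) ∧
      (∀ i, ∑ l, x i l ≤ 1) ∧
      (∀ l, ∑ i, x i l ≤ (q l : ℝ)) ∧
      (∀ k, (qlow k : ℝ) ≤ ∑ i, ∑ l ∈ R k, x i l ∧
        ∑ i, ∑ l ∈ R k, x i l ≤ (qhigh k : ℝ))})
    (q' : Finset (Fin K) → ℤ)
    (hq'single : ∀ k, q' {k} =
      min (qhigh k : ℤ) ((Fintype.card I : ℤ) - ∑ k' ∈ univ.erase k, (qlow k' : ℤ)))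
    (hq'rec : ∀ S : Finset (Fin K), ∀ hS : 2 ≤ S.card,
      q' S = min (S.inf' (Finset.card_pos.mp (by omega)) fun k => q' (S.erase k) + q' {k})
        ((Fintype.card I : ℤ) - ∑ k' ∈ Sᶜ, (qlow k' : ℤ))) :
    {x : I → O → ℝ | (∀ i l, 0 ≤ x i l) ∧ ∃ x' ∈ 𝒞, ∀ i l, x i l ≤ x' i l}
      = {x : I → O → ℝ | (∀ i l, 0 ≤ x i l) ∧
          (∀ i, ∑ l, x i l ≤ 1) ∧
          (∀ l, ∑ i, x i l ≤ (q l : ℝ)) ∧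
          (∀ S : Finset (Fin K), S.Nonempty →
            ∑ i, ∑ l ∈ S.biUnion R, x i l ≤ ((q' S : ℤ) : ℝ))} := by
  classical
  ext x
  simp only [Set.mem_setOf_eq]
  constructor
  · rintro ⟨hxpos, x', hx'C, hxle⟩
    have hDQ : DSet8 I O q R qlow qhigh ⊆
        {y : I → O → ℝ | (∀ i, ∑ l, y i l ≤ 1) ∧ (∀ l, ∑ i, y i l ≤ (q l : ℝ)) ∧
          (∀ S : Finset (Fin K), S.Nonempty →
            ∑ i, ∑ l ∈ S.biUnion R, y i l ≤ ((q' S : ℤ) : ℝ))} := by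
      rintro y ⟨h01, hrow, hcol, hreg⟩
      refine ⟨hrow, hcol, ?_⟩
      intro S hS
      rw [sum_biUnion_regions R hRdisj y S]
      have htot : ∑ k, ∑ i, ∑ l ∈ R k, y i l ≤ (Fintype.card I : ℝ) := by
        have heq : ∑ k, ∑ i, ∑ l ∈ R k, y i l = ∑ i, ∑ l, y i l := by
          rw [Finset.sum_comm]
          exact Finset.sum_congr rfl (fun i _ => sum_partition R hRdisj hRcover _)
        rw [heq]
        calc ∑ i, ∑ l, y i l ≤ ∑ _i : I, (1:ℝ) := Finset.sum_le_sum (fun i _ => hrow i)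
        _ = (Fintype.card I : ℝ) := by
          rw [Finset.sum_const, nsmul_eq_mul, mul_one, Fintype.card]
      exact qbound_aux (Fintype.card I) qlow qhigh q' hq'single hq'rec
        (fun k => ∑ i, ∑ l ∈ R k, y i l) (fun k => (hreg k).1) (fun k => (hreg k).2) htot S hS
    have hQconvex : Convex ℝ
        {y : I → O → ℝ | (∀ i, ∑ l, y i l ≤ 1) ∧ (∀ l, ∑ i, y i l ≤ (q l : ℝ)) ∧
          (∀ S : Finset (Fin K), S.Nonempty →
            ∑ i, ∑ l ∈ S.biUnion R, y i l ≤ ((q' S : ℤ) : ℝ))} := by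
      intro u hu v hv a b ha hb hab
      obtain ⟨hu1, hu2, hu3⟩ := hu
      obtain ⟨hv1, hv2, hv3⟩ := hv
      have happ : ∀ i l, (a • u + b • v) i l = a * u i l + b * v i l := by
        intro i l; simp [Pi.add_apply, Pi.smul_apply]
      refine ⟨?_, ?_, ?_⟩
      · intro i
        have h1 : ∑ l, (a • u + b • v) i l = a * ∑ l, u i l + b * ∑ l, v i l := by
          simp only [happ]
          rw [Finset.sum_add_distrib, Finset.mul_sum, Finset.mul_sum]
        rw [h1]
        nlinarith [mul_le_mul_of_nonneg_left (hu1 i) ha, mul_le_mul_of_nonneg_left (hv1 i) hb]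
      · intro l
        have h1 : ∑ i, (a • u + b • v) i l = a * ∑ i, u i l + b * ∑ i, v i l := by
          simp only [happ]
          rw [Finset.sum_add_distrib, Finset.mul_sum, Finset.mul_sum]
        rw [h1]
        nlinarith [mul_le_mul_of_nonneg_left (hu2 l) ha, mul_le_mul_of_nonneg_left (hv2 l) hb]
      · intro S hS
        have h1 : ∑ i, ∑ l ∈ S.biUnion R, (a • u + b • v) i l
            = a * ∑ i, ∑ l ∈ S.biUnion R, u i l + b * ∑ i, ∑ l ∈ S.biUnion R, v i l := by
          simp only [happ]
          rw [Finset.mul_sum, Finset.mul_sum, ← Finset.sum_add_distrib]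
          apply Finset.sum_congr rfl
          intro i _
          rw [Finset.sum_add_distrib, Finset.mul_sum, Finset.mul_sum]
        rw [h1]
        have hc : a * ((q' S : ℤ) : ℝ) + b * ((q' S : ℤ) : ℝ) = ((q' S : ℤ) : ℝ) := by
          rw [← add_mul, hab, one_mul]
        have h2 := mul_le_mul_of_nonneg_left (hu3 S hS) ha
        have h3 := mul_le_mul_of_nonneg_left (hv3 S hS) hb
        linarith
    have hx'Q : x' ∈ {y : I → O → ℝ | (∀ i, ∑ l, y i l ≤ 1) ∧ (∀ l, ∑ i, y i l ≤ (q l : ℝ)) ∧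
          (∀ S : Finset (Fin K), S.Nonempty →
            ∑ i, ∑ l ∈ S.biUnion R, y i l ≤ ((q' S : ℤ) : ℝ))} := by
      rw [h𝒞] at hx'C
      exact convexHull_min hDQ hQconvex hx'C
    obtain ⟨hr, hc, hs⟩ := hx'Q
    refine ⟨hxpos, ?_, ?_, ?_⟩
    · intro i
      exact le_trans (Finset.sum_le_sum (fun l _ => hxle i l)) (hr i)
    · intro l
      exact le_trans (Finset.sum_le_sum (fun i _ => hxle i l)) (hc l)
    · intro S hS
      exact le_trans (Finset.sum_le_sum (fun i _ =>
        Finset.sum_le_sum (fun l _ => hxle i l))) (hs S hS)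
  · rintro ⟨hxpos, hxrow, hxcol, hxS⟩
    refine ⟨hxpos, ?_⟩
    set s0 : Fin K → ℝ := fun k => ∑ i, ∑ l ∈ R k, x i l with hs0
    set C : Fin K → ℝ := fun k => max (qlow k : ℝ) (s0 k) with hCdef
    have hsingle : ∀ k, s0 k ≤ ((q' {k} : ℤ) : ℝ) := by
      intro k
      have := hxS {k} ⟨k, Finset.mem_singleton_self k⟩
      rwa [Finset.singleton_biUnion] at this
    have hCq : ∀ k, C k ≤ (qhigh k : ℝ) := by
      intro k
      apply max_le
      · exact_mod_cast hquo k
      · refine le_trans (hsingle k) ?_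
        rw [hq'single k]
        have := min_le_left (qhigh k : ℤ)
          ((Fintype.card I : ℤ) - ∑ k' ∈ univ.erase k, (qlow k' : ℤ))
        exact_mod_cast this
    have hCl : ∀ k, (qlow k : ℝ) ≤ C k := fun k => le_max_left _ _
    have hC0 : ∀ k, s0 k ≤ C k := fun k => le_max_right _ _
    have hCN : ∀ k, (qlow k : ℝ) + ∑ k' ∈ univ.erase k, C k' ≤ (Fintype.card I : ℝ) := by
      intro k
      set T : Finset (Fin K) := (univ.erase k).filter (fun k' => (qlow k' : ℝ) < s0 k') with hT
      have hTsub : T ⊆ univ.erase k := Finset.filter_subset _ _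
      have hsplit : ∑ k' ∈ T, C k'
          + ∑ k' ∈ (univ.erase k).filter (fun k' => ¬ ((qlow k' : ℝ) < s0 k')), C k'
          = ∑ k' ∈ univ.erase k, C k' :=
        Finset.sum_filter_add_sum_filter_not _ _ _
      have hTC : ∑ k' ∈ T, C k' = ∑ k' ∈ T, s0 k' := by
        apply Finset.sum_congr rfl
        intro k' hk'
        exact max_eq_right (le_of_lt (Finset.mem_filter.mp hk').2)
      have hNTC : ∑ k' ∈ (univ.erase k).filter (fun k' => ¬ ((qlow k' : ℝ) < s0 k')), C k'
          = ∑ k' ∈ (univ.erase k).filter (fun k' => ¬ ((qlow k' : ℝ) < s0 k')), (qlow k' : ℝ) := by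
        apply Finset.sum_congr rfl
        intro k' hk'
        exact max_eq_left (not_lt.mp (Finset.mem_filter.mp hk').2)
      rcases Finset.eq_empty_or_nonempty T with hTe | hTne
      · rw [← hsplit, hTe, Finset.sum_empty, zero_add, hNTC]
        have hfeq : (univ.erase k).filter (fun k' => ¬ ((qlow k' : ℝ) < s0 k')) = univ.erase k := by
          apply Finset.filter_true_of_mem
          intro k' hk'
          intro hlt
          have : k' ∈ T := Finset.mem_filter.mpr ⟨hk', hlt⟩
          rw [hTe] at this
          exact absurd this (Finset.notMem_empty k')
        rw [hfeq]
        have h1 : (qlow k : ℝ) + ∑ k' ∈ univ.erase k, (qlow k' : ℝ) = ∑ k', (qlow k' : ℝ) :=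
          Finset.add_sum_erase Finset.univ (fun k' => (qlow k' : ℝ)) (Finset.mem_univ k)
        have h2 : ∑ k' : Fin K, (qlow k' : ℝ) ≤ (Fintype.card I : ℝ) := by
          have : ((∑ k' : Fin K, qlow k' : ℕ) : ℝ) ≤ ((Fintype.card I : ℕ) : ℝ) := by
            exact_mod_cast hN1
          rwa [Nat.cast_sum] at this
        linarith
      · have hTbound : ∑ k' ∈ T, s0 k' ≤ ((q' T : ℤ) : ℝ) := by
          have h1 := hxS T hTne
          rwa [sum_biUnion_regions R hRdisj x T] at h1
        have hq'T := q'_le_aux (Fintype.card I) qlow qhigh q' hq'single hq'rec T hTne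
        have hknotmem : k ∉ (univ.erase k).filter (fun k' => ¬ ((qlow k' : ℝ) < s0 k')) := by
          intro hk'
          exact (Finset.mem_erase.mp (Finset.mem_of_mem_filter _ hk')).1 rfl
        have hsub : insert k ((univ.erase k).filter (fun k' => ¬ ((qlow k' : ℝ) < s0 k')))
            ⊆ Tᶜ := by
          intro k' hk'
          rw [Finset.mem_insert] at hk'
          rw [Finset.mem_compl]
          rcases hk' with rfl | hk'
          · intro hkT
            exact (Finset.mem_erase.mp (hTsub hkT)).1 rfl
          · intro hkT
            exact (Finset.mem_filter.mp hk').2 (Finset.mem_filter.mp hkT).2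
        have hcompl_ge : (qlow k : ℝ)
            + ∑ k' ∈ (univ.erase k).filter (fun k' => ¬ ((qlow k' : ℝ) < s0 k')), (qlow k' : ℝ)
            ≤ ∑ k' ∈ Tᶜ, (qlow k' : ℝ) := by
          have hins : ∑ k' ∈ insert k
                ((univ.erase k).filter (fun k' => ¬ ((qlow k' : ℝ) < s0 k'))), (qlow k' : ℝ)
              = (qlow k : ℝ) + ∑ k' ∈ (univ.erase k).filter
                (fun k' => ¬ ((qlow k' : ℝ) < s0 k')), (qlow k' : ℝ) :=
            Finset.sum_insert hknotmem
          rw [← hins]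
          apply Finset.sum_le_sum_of_subset_of_nonneg hsub
          intro j _ _
          positivity
        rw [← hsplit, hTC, hNTC]
        linarith
    obtain ⟨y, hyP, hxy⟩ := raise_aux q R hRdisj hRcover qlow qhigh C hCq hCl hCN hN2
      ((univ.filter (fun i : I => ∑ l, x i l < 1)).card
        + (univ.filter (fun l : O => ∑ i, x i l < (q l : ℝ))).card
        + (univ.filter (fun k : Fin K => ∑ i, ∑ l ∈ R k, x i l < (qlow k : ℝ))).card)
      x hxpos hxrow hxcol hC0 (le_refl _)
    refine ⟨y, ?_, hxy⟩
    rw [h𝒞]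
    exact PSet8_sub_hull q R qlow qhigh hRdisj hRcover hyP
end

section
/- For the modified ceiling quotas: for every ℓ ∈ {2,…,K}, every S ⊆ {1,…,K} with |S| = ℓ, and every k ∈ S, one has q̄'_S ≥ q̲_k + q̄'_{S∖{k}}. -/
/-!
Induct on `S`. By the recursion it suffices to bound each term of the minimum defining `q̄'_S`
from below by `q̲_k + q̄'_{S∖{k}}`. The term `j = k` needs only `q̲_k ≤ q̄'_{{k}}`, which is where
`N ≥ Σ q̲` enters. For `j ≠ k` the induction hypothesis at `S∖{j}` followed by the subadditivity
`q̄'_{S∖{k}} ≤ q̄'_{S∖{j,k}} + q̄'_{{j}}` (built into the recursion) does it. The cap term works because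
removing `k` from `S` adds `q̲_k` to the sum that is subtracted from `N`.
-/

open Finset

theorem Finset.erase_eq_singleton_of_card_eq_two {α : Type*} [DecidableEq α] {S : Finset α}
    {j k : α} (hS : S.card = 2) (hj : j ∈ S) (hk : k ∈ S) (hjk : j ≠ k) : S.erase j = {k} := by
  have hcard : (S.erase j).card ≤ 1 := by rw [card_erase_of_mem hj]; omega
  have hk' : k ∈ S.erase j := mem_erase.mpr ⟨hjk.symm, hk⟩
  exact eq_singleton_iff_unique_mem.mpr ⟨hk', fun x hx => card_le_one_iff.mp hcard hx hk'⟩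

variable {ι : Type*} [Fintype ι] [DecidableEq ι]

def IsQuotaRecursion (N : ℤ) (qlow : ι → ℤ) (q' : Finset ι → ℤ) : Prop :=
  ∀ S : Finset ι, ∀ hS : 2 ≤ S.card,
    q' S = min (S.inf' (card_pos.mp (by omega)) fun k => q' (S.erase k) + q' {k})
      (N - ∑ k' ∈ Sᶜ, qlow k')

section ModifiedCeiling

variable {N : ℤ} {qlow qhigh : ι → ℤ} {q' : Finset ι → ℤ}

theorem qlow_le_quota_singleton (hquo : ∀ k, qlow k ≤ qhigh k) (hN : ∑ k, qlow k ≤ N)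
    (hsingle : ∀ k, q' {k} = min (qhigh k) (N - ∑ k' ∈ univ.erase k, qlow k')) (k : ι) :
    qlow k ≤ q' {k} := by
  rw [hsingle]
  refine le_min (hquo k) ?_
  rw [← sum_erase_add univ qlow (mem_univ k)] at hN
  linarith

theorem quota_le_sub_sum_compl
    (hsingle : ∀ k, q' {k} = min (qhigh k) (N - ∑ k' ∈ univ.erase k, qlow k'))
    (hrec : IsQuotaRecursion N qlow q') {S : Finset ι} (hS : S.Nonempty) :
    q' S ≤ N - ∑ k ∈ Sᶜ, qlow k := by
  rcases (one_le_card.mpr hS).eq_or_lt with h1 | h2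
  · obtain ⟨k, rfl⟩ := card_eq_one.mp h1.symm
    rw [hsingle, compl_singleton]
    exact min_le_right _ _
  · rw [hrec S h2]
    exact min_le_right _ _

theorem quota_le_quota_erase_add (hrec : IsQuotaRecursion N qlow q') {S : Finset ι}
    (hS : 2 ≤ S.card) {j : ι} (hj : j ∈ S) : q' S ≤ q' (S.erase j) + q' {j} := by
  rw [hrec S hS]
  exact (min_le_left _ _).trans (inf'_le _ hj)

theorem qlow_add_quota_erase_le (hlow : ∀ k, qlow k ≤ q' {k})
    (hcap : ∀ S : Finset ι, S.Nonempty → q' S ≤ N - ∑ k ∈ Sᶜ, qlow k)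
    (hrec : IsQuotaRecursion N qlow q') (S : Finset ι) (hS : 2 ≤ S.card) {k : ι} (hk : k ∈ S) :
    qlow k + q' (S.erase k) ≤ q' S := by
  induction S using strongInductionOn with
  | _ S ih =>
    rw [hrec S hS]
    refine le_min ((le_inf'_iff _ _).mpr fun j hj => ?_) ?_
    · obtain rfl | hjk := eq_or_ne j k
      · linarith [hlow j]
      rcases hS.eq_or_lt with hpair | hbig
      · rw [erase_eq_singleton_of_card_eq_two hpair.symm hj hk hjk,
          erase_eq_singleton_of_card_eq_two hpair.symm hk hj hjk.symm]
        linarith [hlow k]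
      · have hind := ih (S.erase j) (erase_ssubset hj)
          (by rw [card_erase_of_mem hj]; omega) (mem_erase.mpr ⟨hjk.symm, hk⟩)
        have hsub := quota_le_quota_erase_add hrec
          (by rw [card_erase_of_mem hk]; omega) (mem_erase.mpr ⟨hjk, hj⟩)
        rw [erase_right_comm] at hsub
        linarith
    · have hne : (S.erase k).Nonempty := by
        rw [← card_pos, card_erase_of_mem hk]; omega
      have hcapk := hcap (S.erase k) hne
      rw [compl_erase, sum_insert (by simp [hk])] at hcapk
      linarith

end ModifiedCeiling

theorem statement9 (K : ℕ) (N : ℤ) (qlow qhigh : Fin K → ℤ)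
    (hquo : ∀ k, qlow k ≤ qhigh k)
    (hN : ∑ k, qlow k ≤ N)
    (q' : Finset (Fin K) → ℤ)
    (hsingle : ∀ k, q' {k} = min (qhigh k) (N - ∑ k' ∈ univ.erase k, qlow k'))
    (hrec : ∀ S : Finset (Fin K), ∀ hS : 2 ≤ S.card,
      q' S = min (S.inf' (Finset.card_pos.mp (by omega)) fun k => q' (S.erase k) + q' {k})
        (N - ∑ k' ∈ Sᶜ, qlow k')) :
    ∀ S : Finset (Fin K), 2 ≤ S.card → ∀ k ∈ S,
      qlow k + q' (S.erase k) ≤ q' S :=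
  fun S hS _ hk =>
    qlow_add_quota_erase_le (qlow_le_quota_singleton hquo hN hsingle)
      (fun _ hT => quota_le_sub_sum_compl hsingle hrec hT) hrec S hS hk
end

section
/- In the three-agent Hylland–Zeckhauser example there is no Walrasian (0-slack) equilibrium: there is no pair (x, p) with p ∈ ℝ²_{≥0} and x_1, x_2, x_3 ∈ Δ_- such that, for each i, x_i maximizes u_i over {z ∈ Δ_- : p · z ≤ p · ω_i}, and x_1 + x_2 + x_3 = (1, 2). -/
/-!
If `b` is at least as expensive as `a`, the bundle `(1, 0)` is affordable, so agents 1 and 2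
both demand all of object `a`, of which there is only one unit. If `a` is strictly dearer,
the bundle `(0, 1)` is affordable, so agent 3 takes exactly `(0, 1)`; agents 1 and 2 then
share `(1, 1)`, and their two budget constraints add up to `p_a + p_b ≤ 2 p·ω`, i.e.
`p_a ≤ p_b`.
-/

/-- Utilities in the Hylland–Zeckhauser example: agents 1 and 2 value object `a`
at 100 and object `b` at 1; agent 3 values `a` at 1 and `b` at 100. -/
noncomputable def uHZ : Fin 3 → (Fin 2 → ℝ) → ℝ :=
  fun i z => if i = 2 then z 0 + 100 * z 1 else 100 * z 0 + z 1

lemma one_le_of_le_mul_add_mul {ua ub za zb : ℝ} (hub : 0 ≤ ub) (hlt : ub < ua)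
    (hz : za + zb ≤ 1) (hu : ua ≤ ua * za + ub * zb) : 1 ≤ za := by
  nlinarith

theorem statement12 :
    ¬ ∃ (x : Fin 3 → Fin 2 → ℝ) (p : Fin 2 → ℝ),
      (∀ l, 0 ≤ p l) ∧
      (∀ i, 0 ≤ x i 0 ∧ 0 ≤ x i 1 ∧ x i 0 + x i 1 ≤ 1) ∧
      (∀ i, p 0 * x i 0 + p 1 * x i 1 ≤ p 0 * (1 / 3) + p 1 * (2 / 3)) ∧
      (∀ i, ∀ z : Fin 2 → ℝ, 0 ≤ z 0 → 0 ≤ z 1 → z 0 + z 1 ≤ 1 →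
        p 0 * z 0 + p 1 * z 1 ≤ p 0 * (1 / 3) + p 1 * (2 / 3) →
        uHZ i z ≤ uHZ i (x i)) ∧
      (x 0 0 + x 1 0 + x 2 0 = 1 ∧ x 0 1 + x 1 1 + x 2 1 = 2) := by
  rintro ⟨x, p, hp, hfeas, hbud, hopt, hsum0, hsum1⟩
  rcases le_or_gt (p 0) (p 1) with hcheap | hdear
  · have hall_a : ∀ i, i ≠ 2 → 1 ≤ x i 0 := fun i hi => by
      have hbest := hopt i ![1, 0] (by simp) (by simp) (by simp) (by simp; linarith [hp 1])
      norm_num [uHZ, hi] at hbest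
      exact one_le_of_le_mul_add_mul (ua := 100) (ub := 1) zero_le_one (by norm_num)
        (hfeas i).2.2 (by linarith)
    linarith [hall_a 0 (by decide), hall_a 1 (by decide), (hfeas 2).1]
  · have hall_b : 1 ≤ x 2 1 := by
      have hbest := hopt 2 ![0, 1] (by simp) (by simp) (by simp) (by simp; linarith)
      norm_num [uHZ] at hbest
      exact one_le_of_le_mul_add_mul (ua := 100) (ub := 1) (zb := x 2 0) zero_le_one (by norm_num)
        (by linarith [(hfeas 2).2.2]) (by linarith)
    obtain ⟨hx20_nonneg, -, hx2_sum⟩ := hfeas 2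
    have hspent : p 0 + p 1 ≤ 2 * (p 0 * (1 / 3) + p 1 * (2 / 3)) := by
      have hx10 : x 1 0 = 1 - x 0 0 := by linarith
      have hx11 : x 1 1 = 1 - x 0 1 := by linarith
      have := add_le_add (hbud 0) (hbud 1)
      rw [hx10, hx11] at this
      linarith
    linarith
end

section
/- In the three-agent Hylland–Zeckhauser example, for every α ∈ (0,1], the price vector p = (6α/(1+2α), 0) together with the assignment x_1 = x_2 = (1/2, 1/2), x_3 = (0, 1) is an α-slack equilibrium: for each i, x_i maximizes u_i over {z ∈ Δ_- : p · z ≤ α + (1−α) p · ω_i}, and x_1 + x_2 + x_3 = (1, 2). -/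
theorem statement13 (α : ℝ) (hα0 : 0 < α) (hα1 : α ≤ 1) :
    ∃ (x : Fin 3 → Fin 2 → ℝ) (p : Fin 2 → ℝ),
      p = ![6 * α / (1 + 2 * α), 0] ∧
      x 0 = ![1 / 2, 1 / 2] ∧ x 1 = ![1 / 2, 1 / 2] ∧ x 2 = ![0, 1] ∧
      (∀ i, (0 ≤ x i 0 ∧ 0 ≤ x i 1 ∧ x i 0 + x i 1 ≤ 1) ∧
        p 0 * x i 0 + p 1 * x i 1 ≤ α + (1 - α) * (p 0 * (1 / 3) + p 1 * (2 / 3)) ∧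
        ∀ z : Fin 2 → ℝ, 0 ≤ z 0 → 0 ≤ z 1 → z 0 + z 1 ≤ 1 →
          p 0 * z 0 + p 1 * z 1 ≤ α + (1 - α) * (p 0 * (1 / 3) + p 1 * (2 / 3)) →
          uHZ i z ≤ uHZ i (x i)) ∧
      (x 0 0 + x 1 0 + x 2 0 = 1 ∧ x 0 1 + x 1 1 + x 2 1 = 2) := by
  have hd : (0:ℝ) < 1 + 2 * α := by linarith
  have hbud : α + (1 - α) * (6 * α / (1 + 2 * α) * (1 / 3))
      = 3 * α / (1 + 2 * α) := by
    field_simp; ring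
  have hmax : ∀ z : Fin 2 → ℝ, 0 ≤ z 0 → 0 ≤ z 1 → z 0 + z 1 ≤ 1 →
      6 * α / (1 + 2 * α) * z 0 + 0 * z 1 ≤ 3 * α / (1 + 2 * α) →
      100 * z 0 + z 1 ≤ 100 * (1/2 : ℝ) + 1/2 := by
    intro z h0 h1 hs hb
    have hz0 : z 0 ≤ 1 / 2 := by
      by_contra h
      push_neg at h
      have : 3 * α / (1 + 2 * α) < 6 * α / (1 + 2 * α) * z 0 := by
        rw [div_mul_eq_mul_div, div_lt_div_iff₀ hd hd]
        nlinarith [mul_pos (mul_pos hα0 (by linarith : (0:ℝ) < 2 * z 0 - 1)) hd]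
      linarith
    linarith
  refine ⟨![![1/2, 1/2], ![1/2, 1/2], ![0, 1]], ![6 * α / (1 + 2 * α), 0],
    rfl, rfl, rfl, rfl, ?_, by show (1/2:ℝ) + 1/2 + 0 = 1; norm_num, by show (1/2:ℝ) + 1/2 + 1 = 2; norm_num⟩
  intro i
  fin_cases i <;> norm_num [uHZ]
  · rw [hbud]
    refine ⟨le_of_eq (by ring), fun z h0 h1 hs hb => ?_⟩
    rw [if_neg (by decide)]
    have := hmax z h0 h1 hs (by linarith)
    linarith
  · rw [hbud]
    refine ⟨le_of_eq (by ring), fun z h0 h1 hs hb => ?_⟩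
    rw [if_neg (by decide)]
    have := hmax z h0 h1 hs (by linarith)
    linarith
  · rw [hbud]
    refine ⟨by positivity, fun z h0 h1 hs hb => ?_⟩
    simp only [show ((⟨2, by omega⟩ : Fin 3) = 2) from by decide, if_true]
    nlinarith
end

section
/- Let X ⊆ ℝ^L_{≥0} be nonempty, compact, and closed under scalar multiplication by elements of [0,1] (x ∈ X and γ ∈ [0,1] imply γx ∈ X), let ω ∈ X, and let P ≥ 0. For p ∈ ℝ_{≥0}^L and α ∈ [0,1] define the budget set B(p, α) = {z ∈ X : p · z ≤ α + (1−α) p · ω}. Then for every δ > 0 there exists α ∈ (0,1) such that for every p ∈ [0, P]^L with p · ω ≥ 1, the Hausdorff distance between B(p, α) and B(p, 0) is less than δ. -/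
open Finset

theorem statement18 (L : ℕ) (X : Set (Fin L → ℝ)) (hXne : X.Nonempty)
    (hXnn : ∀ z ∈ X, ∀ l, 0 ≤ z l)
    (hXcpt : IsCompact X)
    (hXscale : ∀ z ∈ X, ∀ γ : ℝ, 0 ≤ γ → γ ≤ 1 → γ • z ∈ X)
    (ω : Fin L → ℝ) (hω : ω ∈ X)
    (P : ℝ) (hP : 0 ≤ P)
    (δ : ℝ) (hδ : 0 < δ) :
    ∃ α : ℝ, 0 < α ∧ α < 1 ∧
      ∀ p : Fin L → ℝ, (∀ l, 0 ≤ p l ∧ p l ≤ P) → 1 ≤ ∑ l, p l * ω l →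
        Metric.hausdorffDist
          {z | z ∈ X ∧ (∑ l, p l * z l) ≤ α + (1 - α) * ∑ l, p l * ω l}
          {z | z ∈ X ∧ (∑ l, p l * z l) ≤ ∑ l, p l * ω l} < δ := by
  obtain ⟨C, hC⟩ := hXcpt.isBounded.exists_norm_le
  set M : ℝ := max C 1 with hMdef
  have hM1 : (1 : ℝ) ≤ M := le_max_right _ _
  have hM0 : (0 : ℝ) < M := lt_of_lt_of_le one_pos hM1
  set α : ℝ := min (1/2) (δ / (2 * M)) with hα
  have hα0 : 0 < α := lt_min (by norm_num) (div_pos hδ (by positivity))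
  have hα1 : α < 1 := lt_of_le_of_lt (min_le_left _ _) (by norm_num)
  refine ⟨α, hα0, hα1, fun p hp hpω => ?_⟩
  set w : ℝ := ∑ l, p l * ω l with hw
  have hαM : α * M < δ := by
    have h1 : α ≤ δ / (2 * M) := min_le_right _ _
    have h2 : δ / (2 * M) * M = δ / 2 := by field_simp
    have : α * M ≤ δ / 2 := by nlinarith [h1, hM0]
    linarith
  have key : Metric.hausdorffDist
      {z | z ∈ X ∧ (∑ l, p l * z l) ≤ α + (1 - α) * w}
      {z | z ∈ X ∧ (∑ l, p l * z l) ≤ w} ≤ α * M := by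
    apply Metric.hausdorffDist_le_of_mem_dist (by positivity)
    · intro x hx
      refine ⟨x, ⟨hx.1, ?_⟩, by simp; positivity⟩
      have := hx.2
      nlinarith [hα0.le]
    · intro x hx
      refine ⟨(1 - α) • x, ⟨hXscale x hx.1 (1 - α) (by linarith) (by linarith), ?_⟩, ?_⟩
      · have hsum : (∑ l, p l * ((1 - α) • x) l) = (1 - α) * ∑ l, p l * x l := by
          rw [Finset.mul_sum]
          refine Finset.sum_congr rfl fun l _ => ?_
          simp [Pi.smul_apply, smul_eq_mul]; ring
        rw [hsum]
        have := hx.2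
        nlinarith [hα0.le]
      · have hx' : x - (1 - α) • x = α • x := by
          rw [sub_smul, one_smul]; abel
        rw [dist_eq_norm, hx', norm_smul, Real.norm_eq_abs, abs_of_pos hα0]
        have hxM : ‖x‖ ≤ M := le_trans (hC x hx.1) (le_max_left _ _)
        exact mul_le_mul_of_nonneg_left hxM hα0.le
  exact lt_of_le_of_lt key hαM
end

section
/- Let α ∈ (0,1] and let (x*, p*) be an α-slack equilibrium satisfying the cheapest-bundle property. Then x* is 𝒞-constrained Pareto efficient. -/
open Finset

/-!
A Pareto improvement `y` on `x*` costs, at the personalized prices, at least as much as `x*`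
for every agent (cheapest-bundle property) and strictly more for an agent who strictly gains
(otherwise it would have been affordable and preferred to `x*`). Summing over agents, the
total personalized cost of an assignment `z` is `∑ c, p c * a^c · z`, which is at most
`∑ c, p c * b c` for every feasible `z` and equal to it for `x*` by complementary slackness.
-/

theorem sum_dotO_pers {I O C : Type*} [Fintype I] [Fintype O] [Fintype C]
    (a : C → I → O → ℝ) (p : C → ℝ) (z : I → O → ℝ) :
    ∑ i, dotO (pers a p i) (z i) = ∑ c, p c * dotIO (a c) z := by
  simp only [dotO, dotIO, pers, Finset.sum_mul, Finset.mul_sum]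
  simp_rw [Finset.sum_comm (s := (univ : Finset O)) (t := (univ : Finset C))]
  rw [Finset.sum_comm]
  simp_rw [mul_right_comm _ (p _), mul_comm (p _)]

theorem sum_mul_le_of_complementary_slackness {C : Type*} [Fintype C] {p f g b : C → ℝ}
    (hp : ∀ c, 0 ≤ p c) (hg : ∀ c, g c ≤ b c) (hf : ∀ c, f c ≤ b c)
    (hcs : ∀ c, f c < b c → p c = 0) :
    ∑ c, p c * g c ≤ ∑ c, p c * f c := by
  refine Finset.sum_le_sum fun c _ => ?_
  rcases (hf c).lt_or_eq with hlt | heq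
  · simp [hcs c hlt]
  · exact heq ▸ mul_le_mul_of_nonneg_left (hg c) (hp c)

theorem cost_lt_of_utility_lt {β : Type*} {X : Set β} {cost v : β → ℝ} {B : ℝ} {x z : β}
    (hx : cost x ≤ B) (hmax : ∀ z ∈ X, cost z ≤ B → v z ≤ v x) (hz : z ∈ X)
    (hlt : v x < v z) : cost x < cost z :=
  hx.trans_lt (not_le.mp fun hzB => (hmax z hz hzB).not_gt hlt)

theorem cost_le_of_utility_le {β : Type*} {X : Set β} {cost v : β → ℝ} {B : ℝ} {x z : β}
    (hx : cost x ≤ B) (hmax : ∀ z ∈ X, cost z ≤ B → v z ≤ v x)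
    (hcheapest : ∀ z ∈ X, v z = v x → cost x ≤ cost z) (hz : z ∈ X)
    (hle : v x ≤ v z) : cost x ≤ cost z := by
  rcases hle.lt_or_eq with hlt | heq
  · exact (cost_lt_of_utility_lt hx hmax hz hlt).le
  · exact hcheapest z hz heq.symm

theorem constraints_of_mem_of_lcs_eq {I O C : Type*} [Fintype I] [Fintype O]
    {𝒞 : Set (I → O → ℝ)} {X : I → Set (O → ℝ)} {a : C → I → O → ℝ} {b : C → ℝ}
    (h𝒞nn : ∀ x ∈ 𝒞, ∀ i l, 0 ≤ x i l)
    (hlcs : {x : I → O → ℝ | (∀ i l, 0 ≤ x i l) ∧ ∃ x' ∈ 𝒞, ∀ i l, x i l ≤ x' i l}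
      = {x : I → O → ℝ | (∀ i l, 0 ≤ x i l) ∧ (∀ i, x i ∈ X i) ∧ ∀ c, dotIO (a c) x ≤ b c})
    {z : I → O → ℝ} (hz : z ∈ 𝒞) :
    (∀ i, z i ∈ X i) ∧ ∀ c, dotIO (a c) z ≤ b c := by
  have hlow : z ∈ {x : I → O → ℝ | (∀ i l, 0 ≤ x i l) ∧ ∃ x' ∈ 𝒞, ∀ i l, x i l ≤ x' i l} :=
    ⟨h𝒞nn z hz, z, hz, fun _ _ => le_rfl⟩
  rw [hlcs] at hlow
  exact hlow.2

theorem statement19_general {I O C : Type*} [Fintype I] [Fintype O] [Fintype C]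
    (𝒞 : Set (I → O → ℝ))
    (h𝒞nn : ∀ x ∈ 𝒞, ∀ i l, 0 ≤ x i l)
    (X : I → Set (O → ℝ))
    (a : C → I → O → ℝ) (b : C → ℝ)
    (hlcs : {x : I → O → ℝ | (∀ i l, 0 ≤ x i l) ∧ ∃ x' ∈ 𝒞, ∀ i l, x i l ≤ x' i l}
      = {x : I → O → ℝ | (∀ i l, 0 ≤ x i l) ∧ (∀ i, x i ∈ X i) ∧ ∀ c, dotIO (a c) x ≤ b c})
    (u : I → (O → ℝ) → ℝ)
    (ω : I → O → ℝ)
    (α : ℝ)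
    (x : I → O → ℝ) (p : C → ℝ)
    (hp : ∀ c, 0 ≤ p c)
    (hopt : ∀ i, x i ∈ X i ∧
      dotO (pers a p i) (x i) ≤ α + (1 - α) * dotO (pers a p i) (ω i) ∧
      ∀ z ∈ X i, dotO (pers a p i) z ≤ α + (1 - α) * dotO (pers a p i) (ω i) →
        u i z ≤ u i (x i))
    (hfeas : x ∈ 𝒞)
    (hcs : ∀ c, dotIO (a c) x < b c → p c = 0)
    (hcb : ∀ i, ∀ z ∈ X i, u i z = u i (x i) →
      dotO (pers a p i) (x i) ≤ dotO (pers a p i) z) :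
    ¬ ∃ y ∈ 𝒞, (∀ i, u i (x i) ≤ u i (y i)) ∧ ∃ j, u j (x j) < u j (y j) := by
  rintro ⟨y, hy, hge, j, hj⟩
  obtain ⟨hyX, hyb⟩ := constraints_of_mem_of_lcs_eq h𝒞nn hlcs hy
  obtain ⟨-, hxb⟩ := constraints_of_mem_of_lcs_eq h𝒞nn hlcs hfeas
  have hcost : ∑ i, dotO (pers a p i) (x i) < ∑ i, dotO (pers a p i) (y i) :=
    Finset.sum_lt_sum
      (fun i _ => cost_le_of_utility_le (hopt i).2.1 (hopt i).2.2 (hcb i) (hyX i) (hge i))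
      ⟨j, Finset.mem_univ j, cost_lt_of_utility_lt (hopt j).2.1 (hopt j).2.2 (hyX j) hj⟩
  rw [sum_dotO_pers, sum_dotO_pers] at hcost
  exact hcost.not_ge (sum_mul_le_of_complementary_slackness hp hyb hxb hcs)

theorem statement19 {I O C : Type*} [Fintype I] [Fintype O] [Fintype C]
    (S : Finset (I → O → ℝ)) (hSne : S.Nonempty)
    (𝒞 : Set (I → O → ℝ)) (h𝒞 : 𝒞 = convexHull ℝ (S : Set (I → O → ℝ)))
    (h𝒞nn : ∀ x ∈ 𝒞, ∀ i l, 0 ≤ x i l)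
    (X : I → Set (O → ℝ))
    (hXnn : ∀ i, ∀ z ∈ X i, ∀ l, 0 ≤ z l)
    (hXcpt : ∀ i, IsCompact (X i))
    (hXcvx : ∀ i, Convex ℝ (X i))
    (hX0 : ∀ i, (0 : O → ℝ) ∈ X i)
    (hXdc : ∀ i, ∀ y z : O → ℝ, (∀ l, 0 ≤ y l) → (∀ l, y l ≤ z l) → z ∈ X i → y ∈ X i)
    (a : C → I → O → ℝ) (b : C → ℝ)
    (ha : ∀ c i l, 0 ≤ a c i l) (hb : ∀ c, 0 < b c)
    (hlcs : {x : I → O → ℝ | (∀ i l, 0 ≤ x i l) ∧ ∃ x' ∈ 𝒞, ∀ i l, x i l ≤ x' i l}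
      = {x : I → O → ℝ | (∀ i l, 0 ≤ x i l) ∧ (∀ i, x i ∈ X i) ∧ ∀ c, dotIO (a c) x ≤ b c})
    (u : I → (O → ℝ) → ℝ)
    (ω : I → O → ℝ) (hωX : ∀ i, ω i ∈ X i) (hω𝒞 : ω ∈ 𝒞)
    (α : ℝ) (hα0 : 0 < α) (hα1 : α ≤ 1)
    (x : I → O → ℝ) (p : C → ℝ)
    (hp : ∀ c, 0 ≤ p c)
    (hopt : ∀ i, x i ∈ X i ∧
      dotO (pers a p i) (x i) ≤ α + (1 - α) * dotO (pers a p i) (ω i) ∧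
      ∀ z ∈ X i, dotO (pers a p i) z ≤ α + (1 - α) * dotO (pers a p i) (ω i) →
        u i z ≤ u i (x i))
    (hfeas : x ∈ 𝒞)
    (hcs : ∀ c, dotIO (a c) x < b c → p c = 0)
    (hcb : ∀ i, ∀ z ∈ X i, u i z = u i (x i) →
      dotO (pers a p i) (x i) ≤ dotO (pers a p i) z) :
    ¬ ∃ y ∈ 𝒞, (∀ i, u i (x i) ≤ u i (y i)) ∧ ∃ j, u j (x j) < u j (y j) :=
  statement19_general 𝒞 h𝒞nn X a b hlcs u ω α x p hp hopt hfeas hcs hcb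
end
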